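/- arXiv:2406.05740 — 13 statements merged into one kernel-verified Lean document; each statement's English description precedes it below -/
import Mathlib

section
/- Let {β_l}_{l∈ℕ} be a nonincreasing sequence of nonnegative real numbers, let m₁ and l̄ be nonnegative integers, and let μ₀ > 0 and ς ∈ (1/2, 1) be constants such that β_l ≤ μ₀·max{ l^{(1−ς)/(1−2ς)}, (β_{l−m₁} − β_l)^{(1−ς)/ς} } for all l ≥ max{l̄, m₁}. Then there exists μ̂ > 0 such that β_l ≤ max{μ₀, μ̂^{(1−ς)/(1−2ς)}} · ⌊(l − l̄)/(m₁+1)⌋^{(1−ς)/(1−2ς)} for all l ≥ l̄ + m₁ + 1. -/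
/-!
Write `e = (1 - ς)/(1 - 2ς) < 0` and `q = (1 - ς)/ς ∈ (0, 1)`, so that `(e - 1) q = e`. Along the
subsequence `γ k = β (l̄ + k (m₁ + 1))` the hypothesis becomes
`γ (k+1) ≤ μ₀ max ((k+1)^e, (γ k - γ (k+1))^q)`, and `γ k ≤ M k^e` follows by induction for `M`
large. If the second term is active and `γ (k+1) > M (k+1)^e`, then by the mean value theorem
`γ k - γ (k+1) ≤ M (k^e - (k+1)^e) ≤ M (-e) k^(e-1)`, so
`γ (k+1) ≤ μ₀ (-e)^q M^q k^e`, which is at most `M (2k)^e ≤ M (k+1)^e` once `M^(1-q)` dominates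
`μ₀ (-e)^q 2^(-e)`.
-/

open Real

lemma rpow_sub_rpow_add_one_le {x e : ℝ} (hx : 0 < x) (he : e ≤ 0) :
    x ^ e - (x + 1) ^ e ≤ -e * x ^ (e - 1) := by
  obtain ⟨c, hc, hslope⟩ := exists_hasDerivAt_eq_slope (fun t => t ^ e)
      (fun t => e * t ^ (e - 1)) (by linarith : x < x + 1)
      (fun t ht => (continuousAt_rpow_const t e
        (Or.inl (hx.trans_le ht.1).ne')).continuousWithinAt)
      (fun t ht => hasDerivAt_rpow_const (Or.inl (hx.trans ht.1).ne'))
  have hdiff : (x + 1) ^ e - x ^ e = e * c ^ (e - 1) := by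
    rw [hslope]; ring
  have hc_le : c ^ (e - 1) ≤ x ^ (e - 1) := rpow_le_rpow_of_nonpos hx hc.1.le (by linarith)
  nlinarith

lemma mul_rpow_le_self {c M q : ℝ} (hc : 0 ≤ c) (hM : 0 < M) (hq : q < 1)
    (hcM : c ^ (1 - q)⁻¹ ≤ M) : c * M ^ q ≤ M := by
  have hc_le : c ≤ M ^ (1 - q) := by
    calc c = (c ^ (1 - q)⁻¹) ^ (1 - q) := by
          rw [← rpow_mul hc, inv_mul_cancel₀ (by linarith), rpow_one]
      _ ≤ M ^ (1 - q) := rpow_le_rpow (rpow_nonneg hc _) hcM (by linarith)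
  calc c * M ^ q ≤ M ^ (1 - q) * M ^ q := mul_le_mul_of_nonneg_right hc_le (rpow_nonneg hM.le _)
    _ = M := by rw [← rpow_add hM]; simp

lemma le_mul_rpow_add_one_of_le_mul_max {a b x μ₀ M e q : ℝ} (hx : 1 ≤ x) (hμ₀ : 0 ≤ μ₀)
    (he : e < 0) (hq : 0 ≤ q) (heq : (e - 1) * q = e) (hμ₀M : μ₀ ≤ M)
    (hM : μ₀ * (-e) ^ q * 2 ^ (-e) * M ^ q ≤ M) (hba : b ≤ a) (ha : a ≤ M * x ^ e)
    (hb : b ≤ μ₀ * max ((x + 1) ^ e) ((a - b) ^ q)) :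
    b ≤ M * (x + 1) ^ e := by
  have hx0 : 0 < x := by linarith
  have hM0 : 0 ≤ M := hμ₀.trans hμ₀M
  by_contra! hlt
  rcases max_choice ((x + 1) ^ e) ((a - b) ^ q) with h | h <;> rw [h] at hb
  · nlinarith [rpow_nonneg (by linarith : (0 : ℝ) ≤ x + 1) e]
  have hgap : a - b ≤ M * (-e * x ^ (e - 1)) := by
    calc a - b ≤ M * (x ^ e - (x + 1) ^ e) := by linarith
      _ ≤ M * (-e * x ^ (e - 1)) :=
        mul_le_mul_of_nonneg_left (rpow_sub_rpow_add_one_le hx0 he.le) hM0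
  have hb' : b ≤ M * (x + 1) ^ e := by
    calc b ≤ μ₀ * (a - b) ^ q := hb
      _ ≤ μ₀ * (M * (-e * x ^ (e - 1))) ^ q := by gcongr
      _ = μ₀ * (-e) ^ q * 2 ^ (-e) * M ^ q * (2 * x) ^ e := by
        rw [mul_rpow hM0 (mul_nonneg (by linarith) (by positivity)),
          mul_rpow (by linarith) (by positivity), ← rpow_mul hx0.le, heq,
          mul_rpow zero_le_two hx0.le, rpow_neg zero_le_two]
        field_simp
      _ ≤ M * (2 * x) ^ e := mul_le_mul_of_nonneg_right hM (by positivity)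
      _ ≤ M * (x + 1) ^ e :=
        mul_le_mul_of_nonneg_left (rpow_le_rpow_of_nonpos (by linarith) (by linarith) he.le) hM0
  linarith

theorem exists_le_mul_rpow_of_le_mul_max_rpow_sub {γ : ℕ → ℝ} {μ₀ e q : ℝ} (hγ : Antitone γ)
    (hμ₀ : 0 < μ₀) (he : e < 0) (heq : (e - 1) * q = e)
    (hrec : ∀ k : ℕ, 1 ≤ k → γ (k + 1) ≤ μ₀ * max (((k : ℝ) + 1) ^ e) ((γ k - γ (k + 1)) ^ q)) :
    ∃ M, μ₀ ≤ M ∧ ∀ k : ℕ, 1 ≤ k → γ k ≤ M * (k : ℝ) ^ e := by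
  have hq : 0 < q := by nlinarith
  have hq1 : q < 1 := by nlinarith
  set c := μ₀ * (-e) ^ q * 2 ^ (-e)
  set M := max (max μ₀ (γ 1)) (c ^ (1 - q)⁻¹)
  have hμ₀M : μ₀ ≤ M := le_max_of_le_left (le_max_left _ _)
  have hc : 0 ≤ c := by have := rpow_nonneg (neg_nonneg.2 he.le) q; positivity
  have hM : c * M ^ q ≤ M := mul_rpow_le_self hc (hμ₀.trans_le hμ₀M) hq1 (le_max_right _ _)
  refine ⟨M, hμ₀M, fun k hk => ?_⟩
  induction k, hk using Nat.le_induction with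
  | base =>
    simp only [Nat.cast_one, one_rpow, mul_one]
    exact le_max_of_le_left (le_max_right _ _)
  | succ k hk ih =>
    push_cast
    exact le_mul_rpow_add_one_of_le_mul_max (by exact_mod_cast hk) hμ₀.le he hq.le heq hμ₀M hM
      (hγ k.le_succ) ih (hrec k hk)

lemma le_mul_max_rpow_sub_along_arithmetic_progression {β : ℕ → ℝ} (hβ : Antitone β)
    {m₁ lbar : ℕ} {μ₀ e q : ℝ} (hμ₀ : 0 ≤ μ₀) (he : e ≤ 0) (hq : 0 ≤ q)
    (hrec : ∀ l : ℕ, max lbar m₁ ≤ l →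
      β l ≤ μ₀ * max ((l : ℝ) ^ e) ((β (l - m₁) - β l) ^ q)) (k : ℕ) :
    β (lbar + (k + 1) * (m₁ + 1)) ≤ μ₀ * max (((k : ℝ) + 1) ^ e)
      ((β (lbar + k * (m₁ + 1)) - β (lbar + (k + 1) * (m₁ + 1))) ^ q) := by
  set l := lbar + (k + 1) * (m₁ + 1)
  have hkl : k + 1 ≤ l := le_add_left (Nat.le_mul_of_pos_right _ m₁.succ_pos)
  have hshift : lbar + k * (m₁ + 1) ≤ l - m₁ := by
    simp only [l, add_mul, one_mul]; omega
  refine (hrec l (max_le (Nat.le_add_right _ _) ?_)).trans ?_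
  · exact (Nat.le_succ m₁).trans (le_add_left (Nat.le_mul_of_pos_left _ k.succ_pos))
  gcongr μ₀ * max ?_ ?_
  · exact rpow_le_rpow_of_nonpos (by positivity) (by exact_mod_cast hkl) he
  · exact rpow_le_rpow (sub_nonneg.2 (hβ (Nat.sub_le l m₁))) (by linarith [hβ hshift]) hq

theorem stmt_0_general (β : ℕ → ℝ) (hmono : ∀ l, β (l + 1) ≤ β l)
    (m₁ lbar : ℕ) (μ₀ ς : ℝ) (hμ₀ : 0 < μ₀) (hς₁ : 1 / 2 < ς) (hς₂ : ς < 1)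
    (hrec : ∀ l : ℕ, max lbar m₁ ≤ l →
      β l ≤ μ₀ * max ((l : ℝ) ^ ((1 - ς) / (1 - 2 * ς)))
        ((β (l - m₁) - β l) ^ ((1 - ς) / ς))) :
    ∃ μhat : ℝ, 0 < μhat ∧ ∀ l : ℕ, lbar + m₁ + 1 ≤ l →
      β l ≤ max μ₀ (μhat ^ ((1 - ς) / (1 - 2 * ς))) *
        (((l - lbar) / (m₁ + 1) : ℕ) : ℝ) ^ ((1 - ς) / (1 - 2 * ς)) := by
  have hβ : Antitone β := antitone_nat_of_succ_le hmono
  set e := (1 - ς) / (1 - 2 * ς)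
  have he : e < 0 := div_neg_of_pos_of_neg (by linarith) (by linarith)
  have heq : (e - 1) * ((1 - ς) / ς) = e := by
    have h2ς : 1 - 2 * ς ≠ 0 := by linarith
    have hς : ς ≠ 0 := by linarith
    rw [div_sub_one h2ς, div_mul_div_comm, div_eq_div_iff (mul_ne_zero h2ς hς) h2ς]
    ring
  have hsubseq : Monotone fun k : ℕ => lbar + k * (m₁ + 1) := fun a b h => by dsimp; gcongr
  obtain ⟨M, hμ₀M, hM⟩ := exists_le_mul_rpow_of_le_mul_max_rpow_sub (hβ.comp_monotone hsubseq)
    hμ₀ he heq fun k _ =>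
      le_mul_max_rpow_sub_along_arithmetic_progression hβ hμ₀.le he.le
        (div_nonneg (by linarith) (by linarith)) hrec k
  have hMpos : 0 < M := hμ₀.trans_le hμ₀M
  refine ⟨M ^ e⁻¹, rpow_pos_of_pos hMpos _, fun l hl => ?_⟩
  rw [← rpow_mul hMpos.le, inv_mul_cancel₀ he.ne, rpow_one, max_eq_right hμ₀M]
  have hk : 1 ≤ (l - lbar) / (m₁ + 1) := (Nat.one_le_div_iff m₁.succ_pos).2 (by omega)
  have hkl : lbar + (l - lbar) / (m₁ + 1) * (m₁ + 1) ≤ l := by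
    have := Nat.div_mul_le_self (l - lbar) (m₁ + 1)
    omega
  exact (hβ hkl).trans (hM _ hk)

/-- Lemma 2.2 (from [QianPan23, Lemma 2.7]): a nonincreasing nonnegative sequence
satisfying the mixed recursive bound decays at a sublinear rate. -/
theorem stmt_0 (β : ℕ → ℝ) (hnonneg : ∀ l, 0 ≤ β l) (hmono : ∀ l, β (l + 1) ≤ β l)
    (m₁ lbar : ℕ) (μ₀ ς : ℝ) (hμ₀ : 0 < μ₀) (hς₁ : 1 / 2 < ς) (hς₂ : ς < 1)
    (hrec : ∀ l : ℕ, max lbar m₁ ≤ l →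
      β l ≤ μ₀ * max ((l : ℝ) ^ ((1 - ς) / (1 - 2 * ς)))
        ((β (l - m₁) - β l) ^ ((1 - ς) / ς))) :
    ∃ μhat : ℝ, 0 < μhat ∧ ∀ l : ℕ, lbar + m₁ + 1 ≤ l →
      β l ≤ max μ₀ (μhat ^ ((1 - ς) / (1 - 2 * ς))) *
        (((l - lbar) / (m₁ + 1) : ℕ) : ℝ) ^ ((1 - ς) / (1 - 2 * ς)) :=
  stmt_0_general β hmono m₁ lbar μ₀ ς hμ₀ hς₁ hς₂ hrec
end

section
/- Suppose {x^k}_{k≥0} satisfies condition H1. Then the sequence {Φ(x^k)}_{k≥0} is convergent and has the same limit as the sequence {C_k}_{k≥0}. -/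
/-- Lemma 2.3(ii): under condition H1, `{Φ(x^k)}` converges and has the same limit
as `{C_k}`. -/
theorem stmt_2 {X : Type*} [NormedAddCommGroup X] [NormedSpace ℝ X]
    (Φ : X → ℝ) (x : ℕ → X) (a τs C : ℕ → ℝ) (abar τ : ℝ)
    (habar : 0 < abar) (hτ0 : 0 < τ) (hτ1 : τ ≤ 1)
    (ha : ∀ k : ℕ, abar ≤ a (k + 1))
    (hτs : ∀ k : ℕ, τs (k + 1) ∈ Set.Icc τ 1)
    (hC0 : C 0 = Φ (x 0))
    (hCrec : ∀ k : ℕ, C (k + 1) = (1 - τs (k + 1)) * C k + τs (k + 1) * Φ (x (k + 1)))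
    (hH1 : ∀ k : ℕ, Φ (x (k + 1)) + a (k + 1) * ‖x (k + 1) - x k‖ ^ 2 ≤ C k)
    (hbdd : ∃ M : ℝ, ∀ k : ℕ, M ≤ Φ (x k)) :
    ∃ L : ℝ, Filter.Tendsto (fun k => Φ (x k)) Filter.atTop (nhds L) ∧
      Filter.Tendsto C Filter.atTop (nhds L) := by
  obtain ⟨M, hM⟩ := hbdd
  have hΦleC : ∀ k, Φ (x (k + 1)) ≤ C k := by
    intro k
    have h1 := hH1 k
    have h2 := ha k
    nlinarith [sq_nonneg ‖x (k + 1) - x k‖]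
  have hanti : Antitone C := by
    apply antitone_nat_of_succ_le
    intro k
    have h := hΦleC k
    have hτk := hτs k
    rw [hCrec k]
    nlinarith [hτk.1, hτk.2]
  have hCb : ∀ k, M ≤ C k := by
    intro k
    induction k with
    | zero => rw [hC0]; exact hM 0
    | succ n ih =>
      have hτk := hτs n
      have := hM (n + 1)
      rw [hCrec n]
      nlinarith [hτk.1, hτk.2]
  have hbdd' : BddBelow (Set.range C) := ⟨M, by rintro _ ⟨k, rfl⟩; exact hCb k⟩
  set L := ⨅ k, C k with hL
  have hCL : Filter.Tendsto C Filter.atTop (nhds L) :=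
    tendsto_atTop_ciInf hanti hbdd'
  refine ⟨L, ?_, hCL⟩
  -- show the shifted sequence Φ(x(k+1)) tends to L
  have hkey : ∀ k, C k - Φ (x (k + 1)) ≤ (C k - C (k + 1)) / τ := by
    intro k
    have hτk := hτs k
    have h := hΦleC k
    rw [le_div_iff₀ hτ0, hCrec k]
    nlinarith [hτk.1, hτk.2]
  have hdiff0 : Filter.Tendsto (fun k => (C k - C (k + 1)) / τ) Filter.atTop (nhds 0) := by
    have h1 : Filter.Tendsto (fun k => C (k + 1)) Filter.atTop (nhds L) :=
      hCL.comp (Filter.tendsto_add_atTop_nat 1)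
    have := (hCL.sub h1).div_const τ
    simpa using this
  have hsq : Filter.Tendsto (fun k => C k - Φ (x (k + 1))) Filter.atTop (nhds 0) := by
    apply squeeze_zero (fun k => by linarith [hΦleC k]) hkey hdiff0
  have hshift : Filter.Tendsto (fun k => Φ (x (k + 1))) Filter.atTop (nhds L) := by
    have := hCL.sub hsq
    simpa using this
  have := hshift.comp (Filter.tendsto_sub_atTop_nat 1)
  rw [Filter.tendsto_congr' ?_] at this
  · exact this
  · filter_upwards [Filter.eventually_ge_atTop 1] with k hk
    simp [Function.comp, Nat.sub_add_cancel hk]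
end

section
/- Suppose {x^k}_{k≥0} satisfies condition H1. Then lim_{k→∞} (x^{k+1} − x^k) = 0, i.e., ‖x^{k+1} − x^k‖ → 0 as k → ∞. -/
/-- Lemma 2.3(iii): under condition H1, `x^{k+1} - x^k → 0`. -/
theorem stmt_3 {X : Type*} [NormedAddCommGroup X] [NormedSpace ℝ X]
    (Φ : X → ℝ) (x : ℕ → X) (a τs C : ℕ → ℝ) (abar τ : ℝ)
    (habar : 0 < abar) (hτ0 : 0 < τ) (hτ1 : τ ≤ 1)
    (ha : ∀ k : ℕ, abar ≤ a (k + 1))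
    (hτs : ∀ k : ℕ, τs (k + 1) ∈ Set.Icc τ 1)
    (hC0 : C 0 = Φ (x 0))
    (hCrec : ∀ k : ℕ, C (k + 1) = (1 - τs (k + 1)) * C k + τs (k + 1) * Φ (x (k + 1)))
    (hH1 : ∀ k : ℕ, Φ (x (k + 1)) + a (k + 1) * ‖x (k + 1) - x k‖ ^ 2 ≤ C k)
    (hbdd : ∃ M : ℝ, ∀ k : ℕ, M ≤ Φ (x k)) :
    Filter.Tendsto (fun k => x (k + 1) - x k) Filter.atTop (nhds 0) := by
  obtain ⟨M, hM⟩ := hbdd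
  -- C is bounded below by M
  have hMC : ∀ k, M ≤ C k := by
    intro k
    induction k with
    | zero => rw [hC0]; exact hM 0
    | succ n ih =>
      obtain ⟨hτl, hτu⟩ := hτs n
      rw [hCrec n]
      have h1 : (1 - τs (n + 1)) * M ≤ (1 - τs (n + 1)) * C n :=
        mul_le_mul_of_nonneg_left ih (by linarith)
      have h2 : τs (n + 1) * M ≤ τs (n + 1) * Φ (x (n + 1)) :=
        mul_le_mul_of_nonneg_left (hM (n + 1)) (by linarith)
      nlinarith
  -- key decrease inequality
  have hdec : ∀ k, C (k + 1) + τ * abar * ‖x (k + 1) - x k‖ ^ 2 ≤ C k := by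
    intro k
    obtain ⟨hτl, hτu⟩ := hτs k
    have h := hH1 k
    have hnn : (0:ℝ) ≤ ‖x (k + 1) - x k‖ ^ 2 := sq_nonneg _
    have h1 : τ * abar * ‖x (k + 1) - x k‖ ^ 2 ≤ τs (k+1) * (a (k+1) * ‖x (k + 1) - x k‖ ^ 2) := by
      have := ha k
      have h2 : abar * ‖x (k + 1) - x k‖ ^ 2 ≤ a (k+1) * ‖x (k + 1) - x k‖ ^ 2 :=
        mul_le_mul_of_nonneg_right this hnn
      calc τ * abar * ‖x (k + 1) - x k‖ ^ 2 = τ * (abar * ‖x (k + 1) - x k‖ ^ 2) := by ring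
        _ ≤ τs (k+1) * (abar * ‖x (k + 1) - x k‖ ^ 2) :=
            mul_le_mul_of_nonneg_right hτl (mul_nonneg habar.le hnn)
        _ ≤ τs (k+1) * (a (k+1) * ‖x (k + 1) - x k‖ ^ 2) :=
            mul_le_mul_of_nonneg_left h2 (le_trans hτ0.le hτl)
    have h3 : τs (k+1) * Φ (x (k+1)) ≤ τs (k+1) * (C k - a (k+1) * ‖x (k + 1) - x k‖ ^ 2) :=
      mul_le_mul_of_nonneg_left (by linarith) (by linarith)
    rw [hCrec k]
    nlinarith
  have hanti : Antitone C := by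
    apply antitone_nat_of_succ_le
    intro k
    have := hdec k
    nlinarith [sq_nonneg ‖x (k + 1) - x k‖, mul_pos hτ0 habar]
  -- C converges
  have hCconv : ∃ L, Filter.Tendsto C Filter.atTop (nhds L) := by
    refine ⟨⨅ k, C k, tendsto_atTop_ciInf hanti ⟨M, ?_⟩⟩
    rintro y ⟨k, rfl⟩
    exact hMC k
  obtain ⟨L, hL⟩ := hCconv
  have hdiff : Filter.Tendsto (fun k => C k - C (k + 1)) Filter.atTop (nhds 0) := by
    have := hL.sub (hL.comp (Filter.tendsto_add_atTop_nat 1))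
    simpa using this
  have hsq : Filter.Tendsto (fun k => ‖x (k + 1) - x k‖ ^ 2) Filter.atTop (nhds 0) := by
    have hc : (0:ℝ) < τ * abar := mul_pos hτ0 habar
    have := hdiff.div_const (τ * abar)
    rw [zero_div] at this
    refine squeeze_zero (fun k => sq_nonneg _) (fun k => ?_) this
    have := hdec k
    rw [le_div_iff₀ hc]
    nlinarith
  have hnorm : Filter.Tendsto (fun k => ‖x (k + 1) - x k‖) Filter.atTop (nhds 0) := by
    have := hsq.sqrt
    rw [Real.sqrt_zero] at this
    convert this using 2 with k
    rw [Real.sqrt_sq (norm_nonneg _)]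
  rw [tendsto_zero_iff_norm_tendsto_zero]
  exact hnorm
end

section
/- Suppose {x^k}_{k≥0} satisfies conditions H1 and H3, and suppose Φ is lower semicontinuous at the point x̄ from condition H3. Then lim_{j→∞} Φ(x^{k_j}) = Φ(x̄), the sequences {C_k}_{k≥0} and {Φ(x^k)}_{k≥0} both converge to Φ(x̄), and C_k ≥ Φ(x̄) for every k ≥ 0. -/
/-- Lemma 2.3(iv) (convergence part): under conditions H1 and H3, with `Φ` lower
semicontinuous at `x̄`, one has `Φ(x^{k_j}) → Φ(x̄)`, both `{C_k}` and `{Φ(x^k)}`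
converge to `Φ(x̄)`, and `C_k ≥ Φ(x̄)` for every `k`. -/
theorem stmt_4 {X : Type*} [NormedAddCommGroup X] [NormedSpace ℝ X]
    (Φ : X → ℝ) (x : ℕ → X) (a τs C : ℕ → ℝ) (abar τ : ℝ)
    (habar : 0 < abar) (hτ0 : 0 < τ) (hτ1 : τ ≤ 1)
    (ha : ∀ k : ℕ, abar ≤ a (k + 1))
    (hτs : ∀ k : ℕ, τs (k + 1) ∈ Set.Icc τ 1)
    (hC0 : C 0 = Φ (x 0))
    (hCrec : ∀ k : ℕ, C (k + 1) = (1 - τs (k + 1)) * C k + τs (k + 1) * Φ (x (k + 1)))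
    (hH1 : ∀ k : ℕ, Φ (x (k + 1)) + a (k + 1) * ‖x (k + 1) - x k‖ ^ 2 ≤ C k)
    (hbdd : ∃ M : ℝ, ∀ k : ℕ, M ≤ Φ (x k))
    -- condition H3
    (xbar : X) (ks : ℕ → ℕ) (hks : StrictMono ks)
    (hxconv : Filter.Tendsto (fun j => x (ks j)) Filter.atTop (nhds xbar))
    (hlimsup : Filter.limsup (fun j => Φ (x (ks j))) Filter.atTop ≤ Φ xbar)
    (hlsc : LowerSemicontinuousAt Φ xbar) :
    Filter.Tendsto (fun j => Φ (x (ks j))) Filter.atTop (nhds (Φ xbar)) ∧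
      Filter.Tendsto C Filter.atTop (nhds (Φ xbar)) ∧
      Filter.Tendsto (fun k => Φ (x k)) Filter.atTop (nhds (Φ xbar)) ∧
      ∀ k : ℕ, Φ xbar ≤ C k := by
  obtain ⟨M, hM⟩ := hbdd
  -- Φ(x^{k+1}) ≤ C k
  have hΦleC : ∀ k : ℕ, Φ (x (k + 1)) ≤ C k := by
    intro k
    have h := hH1 k
    have h0 : 0 ≤ a (k + 1) * ‖x (k + 1) - x k‖ ^ 2 :=
      mul_nonneg (le_trans habar.le (ha k)) (by positivity)
    linarith
  -- C is antitone
  have hanti : Antitone C := by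
    apply antitone_nat_of_succ_le
    intro k
    obtain ⟨hτl, hτu⟩ := hτs k
    have h1 := hΦleC k
    rw [hCrec k]
    nlinarith
  -- C is bounded below by M
  have hMC : ∀ k : ℕ, M ≤ C k := fun k => le_trans (hM (k + 1)) (hΦleC k)
  have hbb : BddBelow (Set.range C) := ⟨M, by rintro _ ⟨k, rfl⟩; exact hMC k⟩
  set L : ℝ := ⨅ k, C k with hL
  have hCL : Filter.Tendsto C Filter.atTop (nhds L) := tendsto_atTop_ciInf hanti hbb
  have hCL' : Filter.Tendsto (fun k => C (k + 1)) Filter.atTop (nhds L) :=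
    hCL.comp (Filter.tendsto_add_atTop_nat 1)
  -- squeeze for Φ(x^{k+1})
  have hlow : ∀ k : ℕ, C k + (C (k + 1) - C k) / τ ≤ Φ (x (k + 1)) := by
    intro k
    obtain ⟨hτl, hτu⟩ := hτs k
    have hrec := hCrec k
    have hd : Φ (x (k + 1)) - C k ≤ 0 := by linarith [hΦleC k]
    have key : (C (k + 1) - C k) / τ ≤ Φ (x (k + 1)) - C k := by
      rw [div_le_iff₀ hτ0]
      nlinarith
    linarith
  have hlowt : Filter.Tendsto (fun k => C k + (C (k + 1) - C k) / τ) Filter.atTop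
      (nhds L) := by
    have : Filter.Tendsto (fun k => C k + (C (k + 1) - C k) / τ) Filter.atTop
        (nhds (L + (L - L) / τ)) := hCL.add ((hCL'.sub hCL).div_const τ)
    simpa using this
  have hΦsucc : Filter.Tendsto (fun k => Φ (x (k + 1))) Filter.atTop (nhds L) := by
    refine tendsto_of_tendsto_of_tendsto_of_le_of_le hlowt hCL ?_ ?_
    · exact fun k => hlow k
    · exact fun k => hΦleC k
  have hΦt : Filter.Tendsto (fun k => Φ (x k)) Filter.atTop (nhds L) := by
    have := (Filter.tendsto_add_atTop_iff_nat (f := fun k => Φ (x k)) 1).mp hΦsucc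
    exact this
  -- subsequence
  have hsub : Filter.Tendsto (fun j => Φ (x (ks j))) Filter.atTop (nhds L) :=
    hΦt.comp hks.tendsto_atTop
  -- L ≤ Φ x̄ from limsup
  have hle1 : L ≤ Φ xbar := by
    rw [hsub.limsup_eq] at hlimsup
    exact hlimsup
  -- Φ x̄ ≤ L from lsc
  have hle2 : Φ xbar ≤ L := by
    by_contra h
    push_neg at h
    set y := (L + Φ xbar) / 2 with hy
    have hyl : y < Φ xbar := by rw [hy]; linarith
    have hev : ∀ᶠ j in Filter.atTop, y < Φ (x (ks j)) :=
      hxconv.eventually (hlsc y hyl)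
    have : y ≤ L := ge_of_tendsto hsub (hev.mono fun j hj => hj.le)
    rw [hy] at this
    linarith
  have hLeq : L = Φ xbar := le_antisymm hle1 hle2
  rw [← hLeq]
  exact ⟨hsub, hCL, hΦt, fun k => ciInf_le hbb k⟩
end

section
/- Suppose {x^k}_{k≥0} satisfies condition H1. Then for any indices k, k′ with 1 ≤ k ≤ k′ one has Σ_{i=k}^{k′} ‖x^i − x^{i−1}‖ ≤ (1/√(a̲·τ)) · Σ_{i=k}^{k′} Ξ_{i−1}, where Ξ_{i−1} = √(C_{i−1} − C_i). -/
/-- Inequality (2.4) of the paper: under condition H1, for any `1 ≤ k ≤ k'`,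
`Σ_{i=k}^{k'} ‖x^i − x^{i−1}‖ ≤ (1/√(a̲·τ)) Σ_{i=k}^{k'} Ξ_{i−1}` with
`Ξ_{i−1} = √(C_{i−1} − C_i)`. -/
theorem stmt_5 {X : Type*} [NormedAddCommGroup X] [NormedSpace ℝ X]
    (Φ : X → ℝ) (x : ℕ → X) (a τs C : ℕ → ℝ) (abar τ : ℝ)
    (habar : 0 < abar) (hτ0 : 0 < τ) (hτ1 : τ ≤ 1)
    (ha : ∀ k : ℕ, abar ≤ a (k + 1))
    (hτs : ∀ k : ℕ, τs (k + 1) ∈ Set.Icc τ 1)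
    (hC0 : C 0 = Φ (x 0))
    (hCrec : ∀ k : ℕ, C (k + 1) = (1 - τs (k + 1)) * C k + τs (k + 1) * Φ (x (k + 1)))
    (hH1 : ∀ k : ℕ, Φ (x (k + 1)) + a (k + 1) * ‖x (k + 1) - x k‖ ^ 2 ≤ C k)
    (hbdd : ∃ M : ℝ, ∀ k : ℕ, M ≤ Φ (x k)) :
    ∀ k k' : ℕ, 1 ≤ k → k ≤ k' →
      ∑ i ∈ Finset.Icc k k', ‖x i - x (i - 1)‖ ≤
        (1 / Real.sqrt (abar * τ)) * ∑ i ∈ Finset.Icc k k', Real.sqrt (C (i - 1) - C i) := by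
  have hat : 0 < abar * τ := mul_pos habar hτ0
  have hsq : 0 < Real.sqrt (abar * τ) := Real.sqrt_pos.mpr hat
  intro k k' hk hkk'
  rw [Finset.mul_sum]
  apply Finset.sum_le_sum
  intro i hi
  have hi1 : 1 ≤ i := le_trans hk (Finset.mem_Icc.mp hi).1
  obtain ⟨j, rfl⟩ : ∃ j, i = j + 1 := ⟨i - 1, (Nat.succ_pred_eq_of_pos hi1).symm⟩
  simp only [Nat.add_sub_cancel]
  set d := ‖x (j + 1) - x j‖ with hd
  have hd0 : 0 ≤ d := norm_nonneg _
  have hτj := hτs j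
  have hτjl : τ ≤ τs (j + 1) := hτj.1
  have hτjp : 0 < τs (j + 1) := lt_of_lt_of_le hτ0 hτjl
  have h1 : a (j + 1) * d ^ 2 ≤ C j - Φ (x (j + 1)) := by
    have := hH1 j; linarith
  have h2 : abar * d ^ 2 ≤ a (j + 1) * d ^ 2 :=
    mul_le_mul_of_nonneg_right (ha j) (sq_nonneg d)
  have hpos : 0 ≤ C j - Φ (x (j + 1)) := by nlinarith [sq_nonneg d]
  have hkey : abar * τ * d ^ 2 ≤ C j - C (j + 1) := by
    have hCj : C j - C (j + 1) = τs (j + 1) * (C j - Φ (x (j + 1))) := by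
      rw [hCrec j]; ring
    rw [hCj]
    calc abar * τ * d ^ 2 ≤ τ * (a (j + 1) * d ^ 2) := by nlinarith
      _ ≤ τs (j + 1) * (C j - Φ (x (j + 1))) := by
          apply mul_le_mul hτjl h1 (by nlinarith [sq_nonneg d]) (le_of_lt hτjp)
  have hd2 : d ^ 2 ≤ (C j - C (j + 1)) / (abar * τ) := by
    rw [le_div_iff₀ hat]; linarith
  calc d = Real.sqrt (d ^ 2) := by rw [Real.sqrt_sq hd0]
    _ ≤ Real.sqrt ((C j - C (j + 1)) / (abar * τ)) := Real.sqrt_le_sqrt hd2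
    _ = Real.sqrt (C j - C (j + 1)) / Real.sqrt (abar * τ) := Real.sqrt_div (by nlinarith [sq_nonneg d]) _
    _ = 1 / Real.sqrt (abar * τ) * Real.sqrt (C j - C (j + 1)) := by ring
end

section
/- Suppose {x^k}_{k≥0} satisfies condition H1 and, in addition, Φ(x^k) ≤ C_{k+m} holds for some fixed k ≥ 1 and some positive integer m. Then √(τ·(C_k − C_{k+m})) ≤ √(1−τ) · Ξ_{k−1}, and consequently (√τ/√m) · Σ_{i=k}^{k+m−1} Ξ_i ≤ √(1−τ) · Ξ_{k−1}. -/
/-!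
Since `Φ(x^{n+1}) ≤ C_n`, each `C_{n+1}` is a convex combination of `C_n` and a smaller value, so
`C` is nonincreasing. Writing `C_k = (1 - τ_k) C_{k-1} + τ_k Φ(x^k)` and using `Φ(x^k) ≤ C_{k+m}`,
both `C_k - C_{k+m} ≤ (1 - τ_k)(C_{k-1} - Φ(x^k))` and `C_{k-1} - C_k = τ_k (C_{k-1} - Φ(x^k))`,
and `τ ≤ τ_k` gives the first inequality. The second follows from it by Cauchy–Schwarz,
`Σ_{i=k}^{k+m-1} √(C_i - C_{i+1}) ≤ √m · √(C_k - C_{k+m})`, the sum of the squares telescoping.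
-/

open Finset

lemma antitone_of_eq_convex_comb {C t φ : ℕ → ℝ} (ht : ∀ n, 0 ≤ t (n + 1))
    (hC : ∀ n, C (n + 1) = (1 - t (n + 1)) * C n + t (n + 1) * φ (n + 1))
    (hφ : ∀ n, φ (n + 1) ≤ C n) : Antitone C :=
  antitone_nat_of_succ_le fun n => by
    rw [hC n]
    nlinarith [mul_le_mul_of_nonneg_left (hφ n) (ht n)]

lemma mul_sub_le_one_sub_mul_sub {c₀ c₁ c₂ φ t τ : ℝ} (hτ : 0 ≤ τ) (hτt : τ ≤ t)
    (hc₁ : c₁ = (1 - t) * c₀ + t * φ) (hφ₀ : φ ≤ c₀) (hφ₂ : φ ≤ c₂) :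
    τ * (c₁ - c₂) ≤ (1 - τ) * (c₀ - c₁) :=
  calc τ * (c₁ - c₂)
      ≤ τ * ((1 - t) * (c₀ - φ)) := by
        apply mul_le_mul_of_nonneg_left _ hτ
        rw [hc₁]
        linarith
    _ ≤ (1 - τ) * (t * (c₀ - φ)) := by nlinarith [mul_le_mul_of_nonneg_right hτt (sub_nonneg.2 hφ₀)]
    _ = (1 - τ) * (c₀ - c₁) := by rw [hc₁]; ring

lemma sum_sqrt_le_sqrt_card_mul_sqrt_sum {ι : Type*} (s : Finset ι) {g : ι → ℝ}
    (hg : ∀ i, 0 ≤ g i) : ∑ i ∈ s, √(g i) ≤ √(#s) * √(∑ i ∈ s, g i) := by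
  simpa using Real.sum_sqrt_mul_sqrt_le s (f := 1) (fun _ => zero_le_one) hg

lemma sum_Ico_sqrt_sub_succ_div_sqrt_le {C : ℕ → ℝ} (hC : Antitone C) (k m : ℕ) :
    (∑ i ∈ Ico k (k + m), √(C i - C (i + 1))) / √m ≤ √(C k - C (k + m)) := by
  have htelescope : ∑ i ∈ Ico k (k + m), (C i - C (i + 1)) = C k - C (k + m) := by
    simpa only [Pi.neg_apply, neg_sub_neg] using Finset.sum_Ico_sub (-C) (Nat.le_add_right k m)
  apply div_le_of_le_mul₀ (Real.sqrt_nonneg _) (Real.sqrt_nonneg _)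
  calc ∑ i ∈ Ico k (k + m), √(C i - C (i + 1))
      ≤ √(#(Ico k (k + m)) : ℝ) * √(∑ i ∈ Ico k (k + m), (C i - C (i + 1))) :=
        sum_sqrt_le_sqrt_card_mul_sqrt_sum _ fun i => sub_nonneg.2 (hC i.le_succ)
    _ = √(C k - C (k + m)) * √m := by
        rw [htelescope, Nat.card_Ico, Nat.add_sub_cancel_left, mul_comm]

theorem stmt_6_general {X : Type*} [NormedAddCommGroup X] [NormedSpace ℝ X]
    (Φ : X → ℝ) (x : ℕ → X) (a τs C : ℕ → ℝ) (abar τ : ℝ)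
    (habar : 0 < abar) (hτ0 : 0 < τ)
    (ha : ∀ k : ℕ, abar ≤ a (k + 1))
    (hτs : ∀ k : ℕ, τs (k + 1) ∈ Set.Icc τ 1)
    (hCrec : ∀ k : ℕ, C (k + 1) = (1 - τs (k + 1)) * C k + τs (k + 1) * Φ (x (k + 1)))
    (hH1 : ∀ k : ℕ, Φ (x (k + 1)) + a (k + 1) * ‖x (k + 1) - x k‖ ^ 2 ≤ C k)
    (k m : ℕ) (hk : 1 ≤ k)
    (hkK1 : Φ (x k) ≤ C (k + m)) :
    Real.sqrt (τ * (C k - C (k + m))) ≤ Real.sqrt (1 - τ) * Real.sqrt (C (k - 1) - C k) ∧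
      (Real.sqrt τ / Real.sqrt (m : ℝ)) *
          ∑ i ∈ Finset.Icc k (k + m - 1), Real.sqrt (C i - C (i + 1)) ≤
        Real.sqrt (1 - τ) * Real.sqrt (C (k - 1) - C k) := by
  have hΦC : ∀ n, Φ (x (n + 1)) ≤ C n := fun n =>
    le_of_add_le_of_nonneg_left (hH1 n) (mul_nonneg (habar.le.trans (ha n)) (sq_nonneg _))
  have hC : Antitone C := antitone_of_eq_convex_comb (φ := fun n => Φ (x n))
    (fun n => hτ0.le.trans (hτs n).1) hCrec hΦC
  obtain ⟨j, rfl⟩ : ∃ j, k = j + 1 := ⟨k - 1, by omega⟩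
  rw [Nat.add_sub_cancel]
  have first : √(τ * (C (j + 1) - C (j + 1 + m))) ≤ √(1 - τ) * √(C j - C (j + 1)) := by
    rw [← Real.sqrt_mul' _ (sub_nonneg.2 (hC j.le_succ))]
    exact Real.sqrt_le_sqrt
      (mul_sub_le_one_sub_mul_sub hτ0.le (hτs j).1 (hCrec j) (hΦC j) hkK1)
  refine ⟨first, ?_⟩
  have hIcc : Icc (j + 1) (j + 1 + m - 1) = Ico (j + 1) (j + 1 + m) := by ext; simp only [mem_Icc, mem_Ico]; omega
  calc √τ / √m * ∑ i ∈ Icc (j + 1) (j + 1 + m - 1), √(C i - C (i + 1))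
      = √τ * ((∑ i ∈ Ico (j + 1) (j + 1 + m), √(C i - C (i + 1))) / √m) := by
        rw [hIcc, mul_div_assoc', div_mul_eq_mul_div]
    _ ≤ √τ * √(C (j + 1) - C (j + 1 + m)) :=
        mul_le_mul_of_nonneg_left (sum_Ico_sqrt_sub_succ_div_sqrt_le hC _ _) (Real.sqrt_nonneg _)
    _ = √(τ * (C (j + 1) - C (j + 1 + m))) := (Real.sqrt_mul hτ0.le _).symm
    _ ≤ √(1 - τ) * √(C j - C (j + 1)) := first

/-- Case 1 (`k ∈ K₁`) of Lemma 3.1: under condition H1, if `Φ(x^k) ≤ C_{k+m}` then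
`√(τ(C_k − C_{k+m})) ≤ √(1−τ)·Ξ_{k−1}` and consequently
`(√τ/√m)·Σ_{i=k}^{k+m−1} Ξ_i ≤ √(1−τ)·Ξ_{k−1}`. -/
theorem stmt_6 {X : Type*} [NormedAddCommGroup X] [NormedSpace ℝ X]
    (Φ : X → ℝ) (x : ℕ → X) (a τs C : ℕ → ℝ) (abar τ : ℝ)
    (habar : 0 < abar) (hτ0 : 0 < τ) (hτ1 : τ ≤ 1)
    (ha : ∀ k : ℕ, abar ≤ a (k + 1))
    (hτs : ∀ k : ℕ, τs (k + 1) ∈ Set.Icc τ 1)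
    (hC0 : C 0 = Φ (x 0))
    (hCrec : ∀ k : ℕ, C (k + 1) = (1 - τs (k + 1)) * C k + τs (k + 1) * Φ (x (k + 1)))
    (hH1 : ∀ k : ℕ, Φ (x (k + 1)) + a (k + 1) * ‖x (k + 1) - x k‖ ^ 2 ≤ C k)
    (hbdd : ∃ M : ℝ, ∀ k : ℕ, M ≤ Φ (x k))
    (k m : ℕ) (hk : 1 ≤ k) (hm : 1 ≤ m)
    (hkK1 : Φ (x k) ≤ C (k + m)) :
    Real.sqrt (τ * (C k - C (k + m))) ≤ Real.sqrt (1 - τ) * Real.sqrt (C (k - 1) - C k) ∧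
      (Real.sqrt τ / Real.sqrt (m : ℝ)) *
          ∑ i ∈ Finset.Icc k (k + m - 1), Real.sqrt (C i - C (i + 1)) ≤
        Real.sqrt (1 - τ) * Real.sqrt (C (k - 1) - C k) :=
  stmt_6_general Φ x a τs C abar τ habar hτ0 ha hτs hCrec hH1 k m hk hkK1
end

section
/- Suppose {x^k}_{k≥0} satisfies condition H1. Let k1 be a nonnegative integer, let m be a positive integer, fix an index k ≥ k1 + 1, and set S := Σ_{i=k−k1}^{k+k1} Ξ_{i−1}. Suppose there are real numbers Γ ≥ 0, ε ≥ 0 and ĉ ≥ 1/2 such that Φ(x^k) − C_{k+m} ≤ ((2ĉ−1)·S + ε)·Γ. Then (√τ/√m) · Σ_{i=k}^{k+m−1} Ξ_i ≤ (1/2 + √(1−τ))·S + ε + ĉ·Γ. -/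
private lemma sqrt_amgm (a b : ℝ) (ha : 0 ≤ a) (hb : 0 ≤ b) :
    Real.sqrt (a * b) ≤ (a + b) / 2 := by
  rw [Real.sqrt_mul ha]
  nlinarith [Real.sq_sqrt ha, Real.sq_sqrt hb, sq_nonneg (Real.sqrt a - Real.sqrt b)]

private lemma sqrt_add_le (a b : ℝ) (ha : 0 ≤ a) (hb : 0 ≤ b) :
    Real.sqrt (a + b) ≤ Real.sqrt a + Real.sqrt b := by
  have h1 : a + b ≤ (Real.sqrt a + Real.sqrt b) ^ 2 := by
    nlinarith [Real.sq_sqrt ha, Real.sq_sqrt hb,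
      mul_nonneg (Real.sqrt_nonneg a) (Real.sqrt_nonneg b)]
  calc Real.sqrt (a + b) ≤ Real.sqrt ((Real.sqrt a + Real.sqrt b) ^ 2) := Real.sqrt_le_sqrt h1
    _ = Real.sqrt a + Real.sqrt b := Real.sqrt_sq (by positivity)

/-- Case 2 (`k ∈ K₂`) of Lemma 3.1: under condition H1, if
`Φ(x^k) − C_{k+m} ≤ ((2ĉ−1)·S + ε)·Γ` where `S = Σ_{i=k−k1}^{k+k1} Ξ_{i−1}`,
with `Γ, ε ≥ 0` and `ĉ ≥ 1/2`, then
`(√τ/√m)·Σ_{i=k}^{k+m−1} Ξ_i ≤ (1/2 + √(1−τ))·S + ε + ĉ·Γ`. -/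
theorem stmt_7 {X : Type*} [NormedAddCommGroup X] [NormedSpace ℝ X]
    (Φ : X → ℝ) (x : ℕ → X) (a τs C : ℕ → ℝ) (abar τ : ℝ)
    (habar : 0 < abar) (hτ0 : 0 < τ) (hτ1 : τ ≤ 1)
    (ha : ∀ k : ℕ, abar ≤ a (k + 1))
    (hτs : ∀ k : ℕ, τs (k + 1) ∈ Set.Icc τ 1)
    (hC0 : C 0 = Φ (x 0))
    (hCrec : ∀ k : ℕ, C (k + 1) = (1 - τs (k + 1)) * C k + τs (k + 1) * Φ (x (k + 1)))
    (hH1 : ∀ k : ℕ, Φ (x (k + 1)) + a (k + 1) * ‖x (k + 1) - x k‖ ^ 2 ≤ C k)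
    (hbdd : ∃ M : ℝ, ∀ k : ℕ, M ≤ Φ (x k))
    (k1 m k : ℕ) (hm : 1 ≤ m) (hk : k1 + 1 ≤ k)
    (Γ ε chat : ℝ) (hΓ : 0 ≤ Γ) (hε : 0 ≤ ε) (hchat : 1 / 2 ≤ chat)
    (hyp : Φ (x k) - C (k + m) ≤
      ((2 * chat - 1) * (∑ i ∈ Finset.Icc (k - k1) (k + k1), Real.sqrt (C (i - 1) - C i)) + ε) * Γ) :
    (Real.sqrt τ / Real.sqrt (m : ℝ)) *
        ∑ i ∈ Finset.Icc k (k + m - 1), Real.sqrt (C i - C (i + 1)) ≤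
      (1 / 2 + Real.sqrt (1 - τ)) *
          (∑ i ∈ Finset.Icc (k - k1) (k + k1), Real.sqrt (C (i - 1) - C i)) + ε + chat * Γ := by
  set S := ∑ i ∈ Finset.Icc (k - k1) (k + k1), Real.sqrt (C (i - 1) - C i) with hSdef
  set T := ∑ i ∈ Finset.Icc k (k + m - 1), Real.sqrt (C i - C (i + 1)) with hTdef
  have hRHSring : (1 / 2 + Real.sqrt (1 - τ)) * S = S / 2 + Real.sqrt (1 - τ) * S := by ring
  -- basic facts
  have hΦC : ∀ j : ℕ, Φ (x (j + 1)) ≤ C j := by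
    intro j
    have h1 : 0 ≤ a (j + 1) * ‖x (j + 1) - x j‖ ^ 2 :=
      mul_nonneg (habar.le.trans (ha j)) (sq_nonneg _)
    linarith [hH1 j]
  have hdec : ∀ j : ℕ, C (j + 1) ≤ C j := by
    intro j
    have h := mul_nonneg (hτ0.le.trans (hτs j).1) (sub_nonneg.2 (hΦC j))
    rw [hCrec j]; nlinarith
  have hmono : Antitone C := antitone_nat_of_succ_le hdec
  have hS0 : 0 ≤ S := Finset.sum_nonneg fun i _ => Real.sqrt_nonneg _
  -- Ξ_{k-1} ≤ S
  have hXiS : Real.sqrt (C (k - 1) - C k) ≤ S := by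
    apply Finset.single_le_sum (f := fun i => Real.sqrt (C (i - 1) - C i))
      (fun i _ => Real.sqrt_nonneg _)
    exact Finset.mem_Icc.2 ⟨Nat.sub_le k k1, Nat.le_add_right k k1⟩
  -- telescoping
  have htel : ∑ i ∈ Finset.Icc k (k + m - 1), (C i - C (i + 1)) = C k - C (k + m) := by
    have h1 : Finset.Icc k (k + m - 1) = Finset.Ico k (k + m) := by
      rw [← Finset.Ico_add_one_right_eq_Icc]; congr 1; omega
    rw [h1, Finset.sum_Ico_eq_sum_range]
    rw [show k + m - k = m by omega]
    have := Finset.sum_range_sub' (f := fun i => C (k + i)) (n := m)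
    simpa [add_assoc] using this
  have hCkm : 0 ≤ C k - C (k + m) := sub_nonneg.2 (hmono (Nat.le_add_right k m))
  -- Cauchy–Schwarz
  have hT0 : 0 ≤ T := Finset.sum_nonneg fun i _ => Real.sqrt_nonneg _
  have hcard : (Finset.Icc k (k + m - 1)).card = m := by
    rw [Nat.card_Icc]; omega
  have hCS : T ^ 2 ≤ (m : ℝ) * (C k - C (k + m)) := by
    have h := sq_sum_le_card_mul_sum_sq
      (s := Finset.Icc k (k + m - 1)) (f := fun i => Real.sqrt (C i - C (i + 1)))
    rw [hcard] at h
    have h2 : ∑ i ∈ Finset.Icc k (k + m - 1), Real.sqrt (C i - C (i + 1)) ^ 2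
        = C k - C (k + m) := by
      rw [← htel]
      refine Finset.sum_congr rfl fun i _ => ?_
      exact Real.sq_sqrt (sub_nonneg.2 (hdec i))
    rw [h2] at h
    exact_mod_cast h
  have hm0 : (0 : ℝ) < Real.sqrt (m : ℝ) := Real.sqrt_pos.2 (by exact_mod_cast hm)
  have hTle : T ≤ Real.sqrt (m : ℝ) * Real.sqrt (C k - C (k + m)) := by
    have h1 : T ≤ Real.sqrt ((m : ℝ) * (C k - C (k + m))) := by
      calc T = Real.sqrt (T ^ 2) := (Real.sqrt_sq hT0).symm
        _ ≤ _ := Real.sqrt_le_sqrt hCS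
    rwa [Real.sqrt_mul (by positivity)] at h1
  have hLHS : (Real.sqrt τ / Real.sqrt (m : ℝ)) * T
      ≤ Real.sqrt τ * Real.sqrt (C k - C (k + m)) := by
    have h1 : (Real.sqrt τ / Real.sqrt (m : ℝ)) * T
        ≤ (Real.sqrt τ / Real.sqrt (m : ℝ)) * (Real.sqrt (m : ℝ) * Real.sqrt (C k - C (k + m))) :=
      mul_le_mul_of_nonneg_left hTle (by positivity)
    calc (Real.sqrt τ / Real.sqrt (m : ℝ)) * T
        ≤ (Real.sqrt τ / Real.sqrt (m : ℝ)) * (Real.sqrt (m : ℝ) * Real.sqrt (C k - C (k + m))) := h1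
      _ = Real.sqrt τ * Real.sqrt (C k - C (k + m)) := by
          field_simp
  -- the key estimate at index k
  have hk1 : 1 ≤ k := by omega
  have hk' : k - 1 + 1 = k := by omega
  have hrec_k := hCrec (k - 1)
  rw [hk'] at hrec_k
  have hΦk : Φ (x k) ≤ C (k - 1) := by have := hΦC (k - 1); rwa [hk'] at this
  have hτsk : τs k ∈ Set.Icc τ 1 := by have := hτs (k - 1); rwa [hk'] at this
  set D := C k - Φ (x k) with hDdef
  set P := Φ (x k) - C (k + m) with hPdef
  have hE : 0 ≤ C (k - 1) - Φ (x k) := sub_nonneg.2 hΦk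
  have hD0 : 0 ≤ D := by rw [hDdef, hrec_k]; nlinarith [hτsk.2]
  have hkey1 : τ * D ≤ (1 - τ) * (C (k - 1) - C k) := by
    rw [hDdef, hrec_k]
    nlinarith [mul_nonneg (sub_nonneg.2 hτsk.1) hE, hτsk.2, hτ0.le]
  have hsqD : Real.sqrt τ * Real.sqrt D ≤ Real.sqrt (1 - τ) * S := by
    have h1 : Real.sqrt (τ * D) ≤ Real.sqrt ((1 - τ) * (C (k - 1) - C k)) :=
      Real.sqrt_le_sqrt hkey1
    rw [Real.sqrt_mul hτ0.le, Real.sqrt_mul (by linarith)] at h1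
    calc Real.sqrt τ * Real.sqrt D ≤ Real.sqrt (1 - τ) * Real.sqrt (C (k - 1) - C k) := h1
      _ ≤ Real.sqrt (1 - τ) * S :=
          mul_le_mul_of_nonneg_left hXiS (Real.sqrt_nonneg _)
  have hcΓ : 0 ≤ chat * Γ := mul_nonneg (by linarith) hΓ
  rcases le_or_gt P 0 with hP | hP
  · -- easy case : Φ(x k) ≤ C (k+m)
    have h1 : C k - C (k + m) ≤ D := by rw [hDdef]; rw [hPdef] at hP; linarith
    have h2 : Real.sqrt (C k - C (k + m)) ≤ Real.sqrt D := Real.sqrt_le_sqrt h1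
    have h3 : Real.sqrt τ * Real.sqrt (C k - C (k + m)) ≤ Real.sqrt (1 - τ) * S :=
      le_trans (mul_le_mul_of_nonneg_left h2 (Real.sqrt_nonneg _)) hsqD
    linarith [hLHS, h3, hcΓ, hε, hRHSring]
  · -- main case
    have hsplit : C k - C (k + m) = D + P := by rw [hDdef, hPdef]; ring
    have h2 : Real.sqrt (C k - C (k + m)) ≤ Real.sqrt D + Real.sqrt P := by
      rw [hsplit]; exact sqrt_add_le D P hD0 hP.le
    have hτle1 : Real.sqrt τ ≤ 1 := by
      rw [show (1:ℝ) = Real.sqrt 1 by simp]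
      exact Real.sqrt_le_sqrt hτ1
    have h4 : Real.sqrt τ * Real.sqrt P ≤ Real.sqrt P :=
      mul_le_of_le_one_left (Real.sqrt_nonneg _) hτle1
    have h3 : Real.sqrt τ * Real.sqrt (C k - C (k + m))
        ≤ Real.sqrt (1 - τ) * S + Real.sqrt P := by
      calc Real.sqrt τ * Real.sqrt (C k - C (k + m))
          ≤ Real.sqrt τ * (Real.sqrt D + Real.sqrt P) :=
            mul_le_mul_of_nonneg_left h2 (Real.sqrt_nonneg τ)
        _ = Real.sqrt τ * Real.sqrt D + Real.sqrt τ * Real.sqrt P := by ring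
        _ ≤ Real.sqrt (1 - τ) * S + Real.sqrt P := add_le_add hsqD h4
    have hc2 : 0 ≤ 2 * chat - 1 := by linarith
    have hPle : Real.sqrt P ≤ S / 2 + chat * Γ + ε := by
      have h5 : Real.sqrt P ≤ Real.sqrt (((2 * chat - 1) * S + ε) * Γ) :=
        Real.sqrt_le_sqrt (by rw [hPdef]; exact hyp)
      have h6 : ((2 * chat - 1) * S + ε) * Γ = S * ((2 * chat - 1) * Γ) + ε * Γ := by ring
      have h7 : Real.sqrt (S * ((2 * chat - 1) * Γ) + ε * Γ)
          ≤ Real.sqrt (S * ((2 * chat - 1) * Γ)) + Real.sqrt (ε * Γ) :=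
        sqrt_add_le _ _ (mul_nonneg hS0 (mul_nonneg hc2 hΓ)) (mul_nonneg hε hΓ)
      have h8 : Real.sqrt (S * ((2 * chat - 1) * Γ)) ≤ (S + (2 * chat - 1) * Γ) / 2 :=
        sqrt_amgm _ _ hS0 (mul_nonneg hc2 hΓ)
      have h9 : Real.sqrt (ε * Γ) ≤ (ε + Γ) / 2 := sqrt_amgm _ _ hε hΓ
      rw [h6] at h5
      linarith
    linarith [hLHS, h3, hPle, hRHSring]
end

section
/- Let θ ∈ (0, 1/2]. Suppose {x^k}_{k≥0} satisfies conditions H1 and H3, Φ is lower semicontinuous at the point x̄ from condition H3, and {ε_k}_{k≥1} are nonnegative reals with ε_k ≤ γ̃·ρ̃^k for all k ≥ k̃₀, for some k̃₀ ∈ ℕ, γ̃ > 0 and ρ̃ ∈ (0,1). Suppose further there exist κ > 0, a nonnegative integer k1 and k̃ ≥ k1 such that for every k ≥ k̃ with Φ(x^k) > Φ(x̄) one has (Φ(x^k) − Φ(x̄))^θ ≤ κ·( Σ_{i=k−k1}^{k+k1} Ξ_{i−1} + ε_k ). Then there exist γ > 0 and ϱ ∈ (0,1) such that C_k − Φ(x̄)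 ≤ γ·ϱ^k for all sufficiently large k. -/
open Filter

lemma aux_decay (u : ℕ → ℝ) (hanti : Antitone u)
    (α β c : ℝ) (hα0 : 0 < α) (hα1 : α < 1) (hβ0 : 0 < β) (hβ1 : β < 1) (hc : 0 < c)
    (m N0 : ℕ) (hm : 1 ≤ m)
    (hrec : ∀ n : ℕ, N0 ≤ n → u n ≤ α * u (n - m) + c * β ^ n) :
    ∃ γ : ℝ, 0 < γ ∧ ∃ ϱ ∈ Set.Ioo (0:ℝ) 1, ∀ n : ℕ, u n ≤ γ * ϱ ^ n := by
  have hm0 : (0:ℝ) < (m:ℝ) := by exact_mod_cast Nat.pos_of_ne_zero (by omega)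
  set t : ℝ := α ^ ((1 : ℝ) / (2 * (m:ℝ))) with ht_def
  have ht0 : 0 < t := Real.rpow_pos_of_pos hα0 _
  have ht1 : t < 1 := Real.rpow_lt_one hα0.le hα1 (by positivity)
  have htm : t ^ m = α ^ ((1:ℝ)/2) := by
    rw [← Real.rpow_natCast t m, ← Real.rpow_mul hα0.le]
    congr 1
    field_simp
  have hαtm : α < t ^ m := by
    rw [htm, ← Real.sqrt_eq_rpow]
    nlinarith [Real.sq_sqrt hα0.le, Real.sqrt_pos.mpr hα0]
  set ϱ : ℝ := max β t with hϱ_def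
  have hϱ0 : 0 < ϱ := lt_of_lt_of_le hβ0 (le_max_left _ _)
  have hϱ1 : ϱ < 1 := max_lt hβ1 ht1
  have hϱm : α < ϱ ^ m := lt_of_lt_of_le hαtm (pow_le_pow_left₀ ht0.le (le_max_right _ _) m)
  have hϱmpos : 0 < ϱ ^ m := pow_pos hϱ0 m
  have hfrac : α / ϱ ^ m < 1 := (div_lt_one hϱmpos).mpr hϱm
  set γ : ℝ := max (max (c / (1 - α / ϱ ^ m)) (u 0 / ϱ ^ (N0 + m))) 1 with hγ_def
  have hγ1 : (1:ℝ) ≤ γ := le_max_right _ _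
  have hγ0 : 0 < γ := lt_of_lt_of_le one_pos hγ1
  have hcγ : c ≤ γ * (1 - α / ϱ ^ m) := by
    have h1 : c / (1 - α / ϱ ^ m) ≤ γ := le_trans (le_max_left _ _) (le_max_left _ _)
    rw [div_le_iff₀ (by linarith)] at h1
    linarith [h1]
  have hu0γ : u 0 ≤ γ * ϱ ^ (N0 + m) := by
    have h1 : u 0 / ϱ ^ (N0 + m) ≤ γ := le_trans (le_max_right _ _) (le_max_left _ _)
    rw [div_le_iff₀ (pow_pos hϱ0 _)] at h1
    linarith
  refine ⟨γ, hγ0, ϱ, ⟨hϱ0, hϱ1⟩, ?_⟩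
  intro n
  induction n using Nat.strong_induction_on with
  | _ n ih =>
    by_cases hn : n < N0 + m
    · calc u n ≤ u 0 := hanti (Nat.zero_le n)
        _ ≤ γ * ϱ ^ (N0 + m) := hu0γ
        _ ≤ γ * ϱ ^ n := by
            exact mul_le_mul_of_nonneg_left
              (pow_le_pow_of_le_one hϱ0.le hϱ1.le hn.le) hγ0.le
    · push_neg at hn
      have hN0n : N0 ≤ n := le_trans (Nat.le_add_right _ _) hn
      have hmn : m ≤ n := le_trans (Nat.le_add_left _ _) hn
      have hsub : n - m < n := Nat.sub_lt (by omega) (by omega)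
      have ihm := ih (n - m) hsub
      have hrn := hrec n hN0n
      have hpow : ϱ ^ (n - m) = ϱ ^ n / ϱ ^ m := by
        rw [pow_sub₀ _ (ne_of_gt hϱ0) hmn]
        rw [div_eq_mul_inv]
      have hβϱ : β ^ n ≤ ϱ ^ n := pow_le_pow_left₀ hβ0.le (le_max_left _ _) n
      have hP : (0:ℝ) < ϱ ^ n := pow_pos hϱ0 n
      have key : α * (γ * (ϱ ^ n / ϱ ^ m)) + c * β ^ n ≤ γ * ϱ ^ n := by
        have h1 : α * (γ * (ϱ ^ n / ϱ ^ m)) = (α / ϱ ^ m) * (γ * ϱ ^ n) := by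
          field_simp
        rw [h1]
        nlinarith [mul_le_mul_of_nonneg_left hβϱ hc.le,
          mul_le_mul_of_nonneg_right hcγ hP.le, mul_pos hγ0 hP]
      calc u n ≤ α * u (n - m) + c * β ^ n := hrn
        _ ≤ α * (γ * ϱ ^ (n - m)) + c * β ^ n := by nlinarith [ihm]
        _ = α * (γ * (ϱ ^ n / ϱ ^ m)) + c * β ^ n := by rw [hpow]
        _ ≤ γ * ϱ ^ n := key

set_option maxHeartbeats 3000000 in
/-- Lemma 3.4, case `θ ∈ (0,1/2]`: under conditions H1, H3 and lsc of `Φ` at `x̄`,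
if `ε_k ≤ γ̃·ρ̃^k` eventually and the surrogate KL-type inequality
`(Φ(x^k) − Φ(x̄))^θ ≤ κ·(Σ_{i=k−k1}^{k+k1} Ξ_{i−1} + ε_k)` holds for all large `k`
with `Φ(x^k) > Φ(x̄)`, then `C_k − Φ(x̄)` decays R-linearly. -/
theorem stmt_9 {X : Type*} [NormedAddCommGroup X] [NormedSpace ℝ X]
    (Φ : X → ℝ) (x : ℕ → X) (a τs C : ℕ → ℝ) (abar τ : ℝ)
    (habar : 0 < abar) (hτ0 : 0 < τ) (hτ1 : τ ≤ 1)
    (ha : ∀ k : ℕ, abar ≤ a (k + 1))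
    (hτs : ∀ k : ℕ, τs (k + 1) ∈ Set.Icc τ 1)
    (hC0 : C 0 = Φ (x 0))
    (hCrec : ∀ k : ℕ, C (k + 1) = (1 - τs (k + 1)) * C k + τs (k + 1) * Φ (x (k + 1)))
    (hH1 : ∀ k : ℕ, Φ (x (k + 1)) + a (k + 1) * ‖x (k + 1) - x k‖ ^ 2 ≤ C k)
    (hbdd : ∃ M : ℝ, ∀ k : ℕ, M ≤ Φ (x k))
    (xbar : X) (ks : ℕ → ℕ) (hks : StrictMono ks)
    (hxconv : Filter.Tendsto (fun j => x (ks j)) Filter.atTop (nhds xbar))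
    (hlimsup : Filter.limsup (fun j => Φ (x (ks j))) Filter.atTop ≤ Φ xbar)
    (hlsc : LowerSemicontinuousAt Φ xbar)
    (θ : ℝ) (hθ0 : 0 < θ) (hθ : θ ≤ 1 / 2)
    (eps : ℕ → ℝ) (heps : ∀ k : ℕ, 1 ≤ k → 0 ≤ eps k)
    (ktil0 : ℕ) (γtil ρtil : ℝ) (hγtil : 0 < γtil) (hρtil : ρtil ∈ Set.Ioo (0 : ℝ) 1)
    (hepsdecay : ∀ k : ℕ, ktil0 ≤ k → eps k ≤ γtil * ρtil ^ k)
    (κ : ℝ) (hκ : 0 < κ) (k1 ktil : ℕ) (hktil : k1 ≤ ktil)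
    (hKL : ∀ k : ℕ, ktil ≤ k → Φ xbar < Φ (x k) →
      (Φ (x k) - Φ xbar) ^ θ ≤
        κ * ((∑ i ∈ Finset.Icc (k - k1) (k + k1), Real.sqrt (C (i - 1) - C i)) + eps k)) :
    ∃ γ : ℝ, 0 < γ ∧ ∃ ϱ ∈ Set.Ioo (0 : ℝ) 1,
      ∀ᶠ k in Filter.atTop, C k - Φ xbar ≤ γ * ϱ ^ k := by
  obtain ⟨M, hM⟩ := hbdd
  obtain ⟨hρ0, hρ1⟩ := hρtil
  -- Φ(x^{k+1}) ≤ C k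
  have hΦleC : ∀ k : ℕ, Φ (x (k + 1)) ≤ C k := by
    intro k
    have h1 := hH1 k
    have ha' : 0 < a (k + 1) := lt_of_lt_of_le habar (ha k)
    have h2 : 0 ≤ a (k + 1) * ‖x (k + 1) - x k‖ ^ 2 :=
      mul_nonneg ha'.le (sq_nonneg _)
    linarith
  -- C is nonincreasing
  have hCdec : ∀ k : ℕ, C (k + 1) ≤ C k := by
    intro k
    obtain ⟨h2a, h2b⟩ := hτs k
    have h1 := hCrec k
    have h3 := hΦleC k
    nlinarith
  have hCanti : Antitone C := antitone_nat_of_succ_le hCdec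
  -- C is bounded below by M
  have hMC : ∀ k : ℕ, M ≤ C k := by
    intro k
    induction k with
    | zero => rw [hC0]; exact hM 0
    | succ n ihn =>
      obtain ⟨h2a, h2b⟩ := hτs n
      have h1 := hCrec n
      have h3 := hM (n + 1)
      nlinarith
  have hbddC : BddBelow (Set.range C) := ⟨M, by rintro y ⟨k, rfl⟩; exact hMC k⟩
  set L : ℝ := ⨅ k, C k with hL_def
  have hCL : Tendsto C atTop (nhds L) := tendsto_atTop_ciInf hCanti hbddC
  have hLleC : ∀ k : ℕ, L ≤ C k := fun k => ciInf_le hbddC k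
  -- squeeze for Φ (x (k+1))
  have hΦhigh : ∀ k : ℕ, Φ (x (k + 1)) ≤ C (k + 1) := by
    intro k
    obtain ⟨h2a, h2b⟩ := hτs k
    have h1 := hCrec k
    have h3 := hΦleC k
    nlinarith
  have hΦlow : ∀ k : ℕ, C k + (C (k + 1) - C k) / τ ≤ Φ (x (k + 1)) := by
    intro k
    obtain ⟨h2a, h2b⟩ := hτs k
    have h1 := hCrec k
    have h3 := hΦleC k
    have key : C (k + 1) - C k ≤ (Φ (x (k + 1)) - C k) * τ := by nlinarith
    have := (div_le_iff₀ hτ0).mpr key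
    linarith
  have hC1 : Tendsto (fun k => C (k + 1)) atTop (nhds L) :=
    hCL.comp (tendsto_add_atTop_nat 1)
  have hlowtend : Tendsto (fun k => C k + (C (k + 1) - C k) / τ) atTop (nhds L) := by
    have h := hCL.add (((hC1.sub hCL).div_const τ))
    have heq : L + (L - L) / τ = L := by ring
    rwa [heq] at h
  have hΦtend : Tendsto (fun k => Φ (x (k + 1))) atTop (nhds L) :=
    tendsto_of_tendsto_of_tendsto_of_le_of_le hlowtend hC1 hΦlow hΦhigh
  have hΦtend0 : Tendsto (fun k => Φ (x k)) atTop (nhds L) :=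
    (tendsto_add_atTop_iff_nat 1).mp hΦtend
  have hsub : Tendsto (fun j => Φ (x (ks j))) atTop (nhds L) :=
    hΦtend0.comp hks.tendsto_atTop
  have hL1 : L ≤ Φ xbar := hsub.limsup_eq ▸ hlimsup
  have hL2 : Φ xbar ≤ L := by
    by_contra hcon
    push_neg at hcon
    set y : ℝ := (L + Φ xbar) / 2 with hy_def
    have hy1 : L < y := by simp only [hy_def]; linarith
    have hy2 : y < Φ xbar := by simp only [hy_def]; linarith
    have hev : ∀ᶠ z in nhds xbar, y < Φ z := hlsc y hy2
    have hev2 : ∀ᶠ j in atTop, y < Φ (x (ks j)) := hxconv.eventually hev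
    have : y ≤ L := ge_of_tendsto hsub (hev2.mono fun j hj => hj.le)
    linarith
  have hLx : L = Φ xbar := le_antisymm hL1 hL2
  -- r k := C k - Φ xbar is nonneg, antitone, → 0
  have hr0 : ∀ k : ℕ, 0 ≤ C k - Φ xbar := fun k => by
    have h := hLleC k
    rw [hLx] at h
    linarith
  have hrtend : Tendsto (fun k => C k - Φ xbar) atTop (nhds 0) := by
    have h := hCL.sub_const (Φ xbar)
    rwa [hLx, sub_self] at h
  obtain ⟨K1, hK1⟩ := (hrtend.eventually_lt_const one_pos).exists_forall_of_atTop
  -- constants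
  set m : ℕ := 2 * k1 + 1 with hm_def
  set A : ℝ := 1 + 2 * κ ^ 2 * (m : ℝ) ^ 2 with hA_def
  set B : ℝ := 2 * κ ^ 2 with hB_def
  set c₁ : ℝ := A / τ with hc₁_def
  have hApos : 0 < A := by positivity
  have hBpos : 0 < B := by positivity
  have hc₁pos : 0 < c₁ := div_pos hApos hτ0
  set α : ℝ := max (c₁ / (1 + c₁)) (1 - τ) with hα_def
  have hα0 : 0 < α := lt_of_lt_of_le (div_pos hc₁pos (by linarith)) (le_max_left _ _)
  have hα1 : α < 1 := by
    apply max_lt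
    · rw [div_lt_one (by linarith)]; linarith
    · linarith
  set β : ℝ := ρtil ^ 2 with hβ_def
  have hβ0 : 0 < β := by positivity
  have hβ1 : β < 1 := by
    rw [hβ_def]
    nlinarith [hρ0, hρ1]
  set c' : ℝ := (B / τ) * γtil ^ 2 with hc'_def
  have hc'pos : 0 < c' := by positivity
  set K : ℕ := max ktil (max ktil0 K1) with hK_def
  -- key recursion
  have key : ∀ p : ℕ, K ≤ p →
      C (p + 2 * k1 + 1) - Φ xbar ≤ α * (C p - Φ xbar) + c' * β ^ p := by
    intro p hp
    have hpktil : ktil ≤ p + k1 + 1 := by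
      have h := le_max_left ktil (max ktil0 K1)
      omega
    have hpktil0 : ktil0 ≤ p + k1 + 1 := by
      have h := le_trans (le_max_left ktil0 K1) (le_max_right ktil (max ktil0 K1))
      omega
    have hpK1 : K1 ≤ p + k1 := by
      have h := le_trans (le_max_right ktil0 K1) (le_max_right ktil (max ktil0 K1))
      omega
    obtain ⟨hτa, hτb⟩ := hτs (p + k1)
    have hexact := hCrec (p + k1)
    have hmono1 : C (p + 2 * k1 + 1) ≤ C (p + k1 + 1) := hCanti (by omega)
    have hmono2 : C (p + k1) ≤ C p := hCanti (by omega)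
    have hmono3 : C (p + k1 + 1) ≤ C (p + k1) := hCanti (by omega)
    have hr_p := hr0 p
    have hr_pk := hr0 (p + k1)
    have hr_pk1 := hr0 (p + k1 + 1)
    have hr_top := hr0 (p + 2 * k1 + 1)
    have hcβ : 0 ≤ c' * β ^ p := by positivity
    have hid : C (p + k1 + 1) - Φ xbar
        = (1 - τs (p + k1 + 1)) * (C (p + k1) - Φ xbar)
          + τs (p + k1 + 1) * (Φ (x (p + k1 + 1)) - Φ xbar) := by
      rw [hexact]; ring
    by_cases hd : Φ (x (p + k1 + 1)) ≤ Φ xbar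
    · -- easy case: contraction by 1 - τ
      have t1 : (1 - τs (p + k1 + 1)) * (C (p + k1) - Φ xbar)
          ≤ (1 - τ) * (C (p + k1) - Φ xbar) :=
        mul_le_mul_of_nonneg_right (by linarith) hr_pk
      have t2 : τs (p + k1 + 1) * (Φ (x (p + k1 + 1)) - Φ xbar) ≤ 0 :=
        mul_nonpos_of_nonneg_of_nonpos (by linarith) (by linarith)
      have h1 : C (p + k1 + 1) - Φ xbar ≤ (1 - τ) * (C (p + k1) - Φ xbar) := by
        rw [hid]; linarith only [t1, t2]
      have h2 : (1 - τ) * (C (p + k1) - Φ xbar) ≤ (1 - τ) * (C p - Φ xbar) :=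
        mul_le_mul_of_nonneg_left (by linarith) (by linarith)
      have h3 : (1 - τ) * (C p - Φ xbar) ≤ α * (C p - Φ xbar) :=
        mul_le_mul_of_nonneg_right (le_max_right _ _) hr_p
      linarith only [h1, h2, h3, hmono1, hcβ]
    · push_neg at hd
      have hd0 : 0 < Φ (x (p + k1 + 1)) - Φ xbar := by linarith only [hd]
      have hd1 : Φ (x (p + k1 + 1)) - Φ xbar ≤ 1 := by
        have h1 := hΦleC (p + k1)
        have h2 := hK1 (p + k1) hpK1
        linarith only [h1, h2]
      have hD0 : 0 ≤ (C p - Φ xbar) - (C (p + 2 * k1 + 1) - Φ xbar) := by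
        linarith only [hmono1, hmono2, hmono3]
      set D : ℝ := C p - C (p + 2 * k1 + 1) with hD_def
      have hD0' : 0 ≤ D := by rw [hD_def]; linarith only [hmono1, hmono2, hmono3]
      -- bound the sum in KL
      have hKLp := hKL (p + k1 + 1) hpktil hd
      have hIcc1 : p + k1 + 1 - k1 = p + 1 := by omega
      have hIcc2 : p + k1 + 1 + k1 = p + 2 * k1 + 1 := by omega
      rw [hIcc1, hIcc2] at hKLp
      have hsum : (∑ i ∈ Finset.Icc (p + 1) (p + 2 * k1 + 1), Real.sqrt (C (i - 1) - C i))
          ≤ (m : ℝ) * Real.sqrt D := by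
        have hcard : (Finset.Icc (p + 1) (p + 2 * k1 + 1)).card = m := by
          rw [Nat.card_Icc]; omega
        calc (∑ i ∈ Finset.Icc (p + 1) (p + 2 * k1 + 1), Real.sqrt (C (i - 1) - C i))
            ≤ ∑ _i ∈ Finset.Icc (p + 1) (p + 2 * k1 + 1), Real.sqrt D := by
              apply Finset.sum_le_sum
              intro i hi
              rw [Finset.mem_Icc] at hi
              apply Real.sqrt_le_sqrt
              have h1 : C (i - 1) ≤ C p := hCanti (by omega)
              have h2 : C (p + 2 * k1 + 1) ≤ C i := hCanti (by omega)
              rw [hD_def]; linarith only [h1, h2]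
          _ = (m : ℝ) * Real.sqrt D := by
              rw [Finset.sum_const, hcard, nsmul_eq_mul]
      have hepsnn : 0 ≤ eps (p + k1 + 1) := heps _ (by omega)
      have hrpow : Real.sqrt (Φ (x (p + k1 + 1)) - Φ xbar)
          ≤ (Φ (x (p + k1 + 1)) - Φ xbar) ^ θ := by
        rw [Real.sqrt_eq_rpow]
        exact Real.rpow_le_rpow_of_exponent_ge hd0 hd1 hθ
      have hchain : Real.sqrt (Φ (x (p + k1 + 1)) - Φ xbar)
          ≤ κ * ((m : ℝ) * Real.sqrt D + eps (p + k1 + 1)) := by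
        have hmul : κ * ((∑ i ∈ Finset.Icc (p + 1) (p + 2 * k1 + 1),
              Real.sqrt (C (i - 1) - C i)) + eps (p + k1 + 1))
            ≤ κ * ((m : ℝ) * Real.sqrt D + eps (p + k1 + 1)) :=
          mul_le_mul_of_nonneg_left (by linarith) hκ.le
        linarith only [hrpow, hKLp, hmul]
      -- square it
      have hdD : Φ (x (p + k1 + 1)) - Φ xbar
          ≤ 2 * κ ^ 2 * (m : ℝ) ^ 2 * D + B * eps (p + k1 + 1) ^ 2 := by
        have h1 : Real.sqrt (Φ (x (p + k1 + 1)) - Φ xbar)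
              * Real.sqrt (Φ (x (p + k1 + 1)) - Φ xbar)
            = Φ (x (p + k1 + 1)) - Φ xbar := Real.mul_self_sqrt hd0.le
        have h2 : Real.sqrt D * Real.sqrt D = D := Real.mul_self_sqrt hD0'
        have h3 : 0 ≤ Real.sqrt (Φ (x (p + k1 + 1)) - Φ xbar) := Real.sqrt_nonneg _
        have h4 : 0 ≤ Real.sqrt D := Real.sqrt_nonneg _
        have hmnn : (0:ℝ) ≤ (m : ℝ) := Nat.cast_nonneg m
        have h5 := mul_self_le_mul_self h3 hchain
        rw [h1] at h5
        have h6 : ((m : ℝ) * Real.sqrt D + eps (p + k1 + 1)) ^ 2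
            ≤ 2 * (m : ℝ) ^ 2 * D + 2 * eps (p + k1 + 1) ^ 2 := by
          have h6a := two_mul_le_add_sq ((m : ℝ) * Real.sqrt D) (eps (p + k1 + 1))
          have h6b : ((m : ℝ) * Real.sqrt D) ^ 2 = (m : ℝ) ^ 2 * D := by
            rw [mul_pow, sq (Real.sqrt D), h2]
          calc ((m : ℝ) * Real.sqrt D + eps (p + k1 + 1)) ^ 2
              = ((m : ℝ) * Real.sqrt D) ^ 2
                + 2 * ((m : ℝ) * Real.sqrt D) * eps (p + k1 + 1)
                + eps (p + k1 + 1) ^ 2 := by ring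
            _ ≤ ((m : ℝ) * Real.sqrt D) ^ 2
                + (((m : ℝ) * Real.sqrt D) ^ 2 + eps (p + k1 + 1) ^ 2)
                + eps (p + k1 + 1) ^ 2 := by linarith only [h6a]
            _ = 2 * (((m : ℝ) * Real.sqrt D) ^ 2) + 2 * eps (p + k1 + 1) ^ 2 := by ring
            _ = 2 * (m : ℝ) ^ 2 * D + 2 * eps (p + k1 + 1) ^ 2 := by rw [h6b]; ring
        have h7 : κ * ((m : ℝ) * Real.sqrt D + eps (p + k1 + 1))
              * (κ * ((m : ℝ) * Real.sqrt D + eps (p + k1 + 1)))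
            = κ ^ 2 * ((m : ℝ) * Real.sqrt D + eps (p + k1 + 1)) ^ 2 := by ring
        rw [h7] at h5
        have h8 : κ ^ 2 * ((m : ℝ) * Real.sqrt D + eps (p + k1 + 1)) ^ 2
            ≤ κ ^ 2 * (2 * (m : ℝ) ^ 2 * D + 2 * eps (p + k1 + 1) ^ 2) :=
          mul_le_mul_of_nonneg_left h6 (by positivity)
        have h9 : κ ^ 2 * (2 * (m : ℝ) ^ 2 * D + 2 * eps (p + k1 + 1) ^ 2)
            = 2 * κ ^ 2 * (m : ℝ) ^ 2 * D + B * eps (p + k1 + 1) ^ 2 := by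
          rw [hB_def]; ring
        linarith only [h5, h8, h9]
      -- eps bound
      have hepsb : eps (p + k1 + 1) ^ 2 ≤ γtil ^ 2 * β ^ p := by
        have h1 := hepsdecay (p + k1 + 1) hpktil0
        have h2 : ρtil ^ (p + k1 + 1) ≤ ρtil ^ p :=
          pow_le_pow_of_le_one hρ0.le hρ1.le (by omega)
        have h3 : eps (p + k1 + 1) ≤ γtil * ρtil ^ p := by
          have h2' := mul_le_mul_of_nonneg_left h2 hγtil.le
          linarith only [h1, h2']
        have h4 : γtil ^ 2 * β ^ p = (γtil * ρtil ^ p) ^ 2 := by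
          rw [hβ_def, ← pow_mul, mul_comm 2 p, pow_mul]; ring
        rw [h4]
        exact pow_le_pow_left₀ hepsnn h3 2
      -- main chain
      have hstep : τ * (C (p + k1) - Φ xbar)
          ≤ A * D + B * eps (p + k1 + 1) ^ 2 := by
        have hδ : C (p + k1) - C (p + k1 + 1) ≤ D := by rw [hD_def]; linarith
        have h1 : τ * (C (p + k1) - Φ xbar) ≤ τs (p + k1 + 1) * (C (p + k1) - Φ xbar) :=
          mul_le_mul_of_nonneg_right hτa hr_pk
        have h2 : τs (p + k1 + 1) * (C (p + k1) - Φ xbar)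
            = (C (p + k1) - C (p + k1 + 1))
              + τs (p + k1 + 1) * (Φ (x (p + k1 + 1)) - Φ xbar) := by
          rw [hexact]; ring
        have h3 : τs (p + k1 + 1) * (Φ (x (p + k1 + 1)) - Φ xbar)
            ≤ Φ (x (p + k1 + 1)) - Φ xbar := mul_le_of_le_one_left hd0.le hτb
        have h4 : A * D = D + 2 * κ ^ 2 * (m : ℝ) ^ 2 * D := by rw [hA_def]; ring
        linarith only [hdD, hδ, h1, h2, h3, h4]
      -- conclude
      have h1c : (0:ℝ) < 1 + c₁ := by linarith only [hc₁pos]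
      have hfin : (1 + c₁) * (C (p + 2 * k1 + 1) - Φ xbar)
          ≤ c₁ * (C p - Φ xbar) + (B / τ) * eps (p + k1 + 1) ^ 2 := by
        have h3 : C (p + k1) - Φ xbar ≤ c₁ * D + (B / τ) * eps (p + k1 + 1) ^ 2 := by
          have h5 : (C (p + k1) - Φ xbar) * τ ≤ A * D + B * eps (p + k1 + 1) ^ 2 := by
            linarith only [hstep]
          have h6 := (le_div_iff₀ hτ0).mpr h5
          have h7 : (A * D + B * eps (p + k1 + 1) ^ 2) / τ
              = c₁ * D + (B / τ) * eps (p + k1 + 1) ^ 2 := by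
            rw [hc₁_def]; field_simp
          linarith only [h6, h7]
        have h8 : c₁ * D = c₁ * (C p - Φ xbar) - c₁ * (C (p + 2 * k1 + 1) - Φ xbar) := by
          rw [hD_def]; ring
        have hexp : (1 + c₁) * (C (p + 2 * k1 + 1) - Φ xbar)
            = (C (p + 2 * k1 + 1) - Φ xbar) + c₁ * (C (p + 2 * k1 + 1) - Φ xbar) := by
          ring
        linarith only [h3, h8, hmono1, hmono3, hexp]
      have hEnn : 0 ≤ (B / τ) * eps (p + k1 + 1) ^ 2 := by positivity
      have hmain : C (p + 2 * k1 + 1) - Φ xbar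
          ≤ (c₁ / (1 + c₁)) * (C p - Φ xbar) + (B / τ) * eps (p + k1 + 1) ^ 2 := by
        have h9 : C (p + 2 * k1 + 1) - Φ xbar
            ≤ (c₁ * (C p - Φ xbar) + (B / τ) * eps (p + k1 + 1) ^ 2) / (1 + c₁) := by
          rw [le_div_iff₀ h1c]
          linarith only [hfin]
        have h10 : (c₁ * (C p - Φ xbar) + (B / τ) * eps (p + k1 + 1) ^ 2) / (1 + c₁)
            = (c₁ / (1 + c₁)) * (C p - Φ xbar)
              + ((B / τ) * eps (p + k1 + 1) ^ 2) / (1 + c₁) := by ring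
        have h11 : ((B / τ) * eps (p + k1 + 1) ^ 2) / (1 + c₁)
            ≤ (B / τ) * eps (p + k1 + 1) ^ 2 :=
          div_le_self hEnn (by linarith)
        rw [h10] at h9
        linarith only [h9, h11]
      have h12 : (c₁ / (1 + c₁)) * (C p - Φ xbar) ≤ α * (C p - Φ xbar) :=
        mul_le_mul_of_nonneg_right (le_max_left _ _) hr_p
      have h13 : (B / τ) * eps (p + k1 + 1) ^ 2 ≤ c' * β ^ p := by
        have h14 := mul_le_mul_of_nonneg_left hepsb (le_of_lt (div_pos hBpos hτ0))
        have h15 : (B / τ) * (γtil ^ 2 * β ^ p) = c' * β ^ p := by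
          rw [hc'_def]; ring
        linarith only [h14, h15]
      linarith only [hmain, h12, h13]
  -- assemble via aux_decay
  have hanti : Antitone (fun n => C n - Φ xbar) := fun i j h => by
    dsimp only
    have := hCanti h
    linarith
  have hm1 : 1 ≤ m := by omega
  have hcpos : 0 < c' / β ^ m := by positivity
  have hrec : ∀ n : ℕ, K + m ≤ n →
      (fun n => C n - Φ xbar) n
        ≤ α * ((fun n => C n - Φ xbar) (n - m)) + (c' / β ^ m) * β ^ n := by
    intro n hn
    have hpK : K ≤ n - m := by omega
    have hkey := key (n - m) hpK
    have hn' : n - m + 2 * k1 + 1 = n := by omega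
    rw [hn'] at hkey
    have hβm : β ^ (n - m) = β ^ n / β ^ m := by
      rw [pow_sub₀ _ (ne_of_gt hβ0) (by omega), div_eq_mul_inv]
    rw [hβm] at hkey
    have heq : c' * (β ^ n / β ^ m) = (c' / β ^ m) * β ^ n := by ring
    dsimp only
    linarith only [hkey, heq]
  obtain ⟨γ, hγ, ϱ, hϱ, hall⟩ :=
    aux_decay (fun n => C n - Φ xbar) hanti α β (c' / β ^ m)
      hα0 hα1 hβ0 hβ1 hcpos m (K + m) hm1 hrec
  exact ⟨γ, hγ, ϱ, hϱ, Filter.Eventually.of_forall hall⟩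
end

section
/- Let θ ∈ (1/2, 1). Suppose {x^k}_{k≥0} satisfies conditions H1 and H3, Φ is lower semicontinuous at the point x̄ from condition H3, and {ε_k}_{k≥1} are nonnegative reals with ε_k ≤ γ̃·k^{θ/(1−2θ)} for all k ≥ k̃₀, for some k̃₀ ∈ ℕ and γ̃ > 0. Suppose further there exist κ > 0, a nonnegative integer k1 and k̃ ≥ k1 such that for every k ≥ k̃ with Φ(x^k) > Φ(x̄) one has (Φ(x^k) − Φ(x̄))^θ ≤ κ·( Σ_{i=k−k1}^{k+k1} Ξ_{i−1} + ε_k ). Then there exists γ > 0 such that C_k − Φ(x̄) ≤ γ·k^{1/(1−2θ)} for all sufficiently large k. -/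
/-!
Because `C` is a nonincreasing running average of `Φ (x k)` that dominates `Φ (x (k + 1))`,
both sequences converge to a common limit, which H3 and lower semicontinuity identify as `Φ x̄`.
With `r k = C k - Φ x̄` and `Δ = C (k - k1 - 1) - C (k + k1)`, the descent step gives
`r (k + k1) ≤ Δ / τ + (Φ (x k) - Φ x̄)⁺`, and squaring the KL inequality bounds the second
term, so `r n ^ (2θ) ≤ A (r (n - p) - r n) + B n ^ (2θ / (1 - 2θ))` with `p = 2 k1 + 1`.
A strong induction over blocks of length `p`, using the convexity of `t ↦ t ^ (-β)` for
`β = 1 / (2θ - 1)`, turns this recursion into `r n ≤ γ n ^ (-β)`.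
-/

open Real Filter Set Topology

theorem Real.rpow_neg_sub_rpow_neg_le {β y z : ℝ} (hβ : 0 ≤ β) (hy : 0 < y) (hyz : y ≤ z) :
    y ^ (-β) - z ^ (-β) ≤ β * (z - y) * y ^ (-β - 1) := by
  have hderiv : ∀ t ∈ interior (Ici y), -β * y ^ (-β - 1) ≤ deriv (fun t : ℝ ↦ t ^ (-β)) t := by
    intro t ht
    rw [interior_Ici, mem_Ioi] at ht
    rw [deriv_rpow_const, neg_mul, neg_mul, neg_le_neg_iff]
    exact mul_le_mul_of_nonneg_left (rpow_le_rpow_of_nonpos hy ht.le (by linarith)) hβ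
  have hcont : ContinuousOn (fun t : ℝ ↦ t ^ (-β)) (Ici y) := fun t ht ↦
    (continuousAt_rpow_const t _ (Or.inl (hy.trans_le ht).ne')).continuousWithinAt
  have hdiff : DifferentiableOn ℝ (fun t : ℝ ↦ t ^ (-β)) (interior (Ici y)) := fun t ht ↦ by
    rw [interior_Ici, mem_Ioi] at ht
    exact (differentiableAt_rpow_const_of_ne _ (hy.trans ht).ne').differentiableWithinAt
  have := (convex_Ici y).mul_sub_le_image_sub_of_le_deriv hcont hdiff hderiv
    y self_mem_Ici z hyz hyz
  linarith

theorem Real.rpow_le_two_rpow_mul_of_half_le {e n k : ℝ} (he : e ≤ 0) (hn : 0 < n)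
    (hk : n / 2 ≤ k) : k ^ e ≤ 2 ^ (-e) * n ^ e := by
  calc k ^ e ≤ (n / 2) ^ e := rpow_le_rpow_of_nonpos (by positivity) hk he
    _ = 2 ^ (-e) * n ^ e := by
      rw [div_rpow hn.le zero_le_two, rpow_neg zero_le_two, div_eq_inv_mul]

theorem Real.rpow_add_le_two_mul {q a b : ℝ} (ha : 0 ≤ a) (hb : 0 ≤ b) (hq1 : 1 ≤ q)
    (hq2 : q ≤ 2) : (a + b) ^ q ≤ 2 * (a ^ q + b ^ q) := by
  lift a to NNReal using ha
  lift b to NNReal using hb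
  have h := NNReal.rpow_add_le_mul_rpow_add_rpow a b hq1
  have h2 : (2 : NNReal) ^ (q - 1) ≤ 2 := by
    simpa using NNReal.rpow_le_rpow_of_exponent_le (x := 2) one_le_two (by linarith : q - 1 ≤ 1)
  exact_mod_cast h.trans (mul_le_mul_of_nonneg_right h2 (by positivity))

theorem Real.div_rpow_le_div_sq {q Δ τ : ℝ} (hΔ0 : 0 ≤ Δ) (hΔ1 : Δ ≤ 1) (hτ0 : 0 < τ)
    (hτ1 : τ ≤ 1) (hq1 : 1 ≤ q) (hq2 : q ≤ 2) : (Δ / τ) ^ q ≤ Δ / τ ^ 2 := by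
  rw [div_rpow hΔ0 hτ0.le]
  gcongr
  · simpa using rpow_le_rpow_of_exponent_ge' hΔ0 hΔ1 zero_le_one hq1
  · exact_mod_cast rpow_le_rpow_of_exponent_ge hτ0 hτ1 hq2

theorem Real.rpow_two_mul_le_of_rpow_le {θ κ d S P Δ e : ℝ} (hd : 0 ≤ d) (hκ : 0 ≤ κ)
    (hΔ : 0 ≤ Δ) (hdS : d ^ θ ≤ κ * (S + e)) (hS : S ≤ P * √Δ) :
    d ^ (2 * θ) ≤ 2 * κ ^ 2 * (P ^ 2 * Δ + e ^ 2) := by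
  have hdP : d ^ θ ≤ κ * (P * √Δ + e) := hdS.trans (by gcongr)
  calc d ^ (2 * θ) = (d ^ θ) ^ 2 := by rw [mul_comm, rpow_mul hd]; norm_cast
    _ ≤ (κ * (P * √Δ + e)) ^ 2 := pow_le_pow_left₀ (by positivity) hdP 2
    _ ≤ κ ^ 2 * (2 * ((P * √Δ) ^ 2 + e ^ 2)) := by rw [mul_pow]; gcongr; exact add_sq_le
    _ = 2 * κ ^ 2 * (P ^ 2 * Δ + e ^ 2) := by rw [mul_pow, sq_sqrt hΔ]; ring

theorem sum_sqrt_sub_le {C : ℕ → ℝ} (hC : Antitone C) (a b : ℕ) :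
    ∑ i ∈ Finset.Icc a b, √(C (i - 1) - C i) ≤
      ((b + 1 - a : ℕ) : ℝ) * √(C (a - 1) - C b) := by
  rw [← Nat.card_Icc, ← nsmul_eq_mul]
  refine Finset.sum_le_card_nsmul _ _ _ fun i hi ↦ ?_
  rw [Finset.mem_Icc] at hi
  gcongr
  · exact hC (by omega)
  · exact hC hi.2

theorem le_mul_rpow_of_rpow_le_sub {q β A B γ : ℝ} {p n : ℕ} {s : ℕ → ℝ} (hq : 1 < q)
    (hβ : β * (q - 1) = 1) (hA : 0 ≤ A) (hB : 0 ≤ B) (hγ1 : 1 ≤ γ)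
    (hγ : A * β * p * 2 ^ (β + 1) + B ≤ γ ^ (q - 1)) (hn : 0 < n) (hpn : 2 * p ≤ n)
    (hprev : s (n - p) ≤ γ * ((n - p : ℕ) : ℝ) ^ (-β))
    (hrec : s n ^ q ≤ A * (s (n - p) - s n) + B * (n : ℝ) ^ (-β - 1)) :
    s n ≤ γ * (n : ℝ) ^ (-β) := by
  -- otherwise the recursion and the tangent-line bound give `γ ^ q < c γ + B ≤ γ ^ q`,
  -- where `c = A β p 2 ^ (β + 1)`
  by_contra! hlt
  have hβ0 : 0 ≤ β := by nlinarith
  have hnR : (0 : ℝ) < n := by exact_mod_cast hn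
  have hpR : ((n - p : ℕ) : ℝ) = n - p := Nat.cast_sub (by omega)
  have hhalf : (n : ℝ) / 2 ≤ ((n - p : ℕ) : ℝ) := by
    have : (2 * p : ℝ) ≤ n := by exact_mod_cast hpn
    linarith
  have hy : (0 : ℝ) < ((n - p : ℕ) : ℝ) := by linarith
  have hpow : (γ * (n : ℝ) ^ (-β)) ^ q = γ ^ q * (n : ℝ) ^ (-β - 1) := by
    rw [mul_rpow (by positivity) (by positivity), ← rpow_mul hnR.le]
    congr 2
    linear_combination -hβ
  have htangent : ((n - p : ℕ) : ℝ) ^ (-β) - (n : ℝ) ^ (-β) ≤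
      β * p * (2 ^ (β + 1) * (n : ℝ) ^ (-β - 1)) :=
    calc _ ≤ β * (n - ((n - p : ℕ) : ℝ)) * ((n - p : ℕ) : ℝ) ^ (-β - 1) :=
          rpow_neg_sub_rpow_neg_le hβ0 hy (by linarith [(Nat.cast_nonneg p : (0 : ℝ) ≤ p)])
      _ = β * p * ((n - p : ℕ) : ℝ) ^ (-β - 1) := by rw [hpR]; ring
      _ ≤ β * p * (2 ^ (β + 1) * (n : ℝ) ^ (-β - 1)) := by
          gcongr
          calc _ ≤ 2 ^ (-(-β - 1)) * (n : ℝ) ^ (-β - 1) :=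
                rpow_le_two_rpow_mul_of_half_le (by linarith) hnR hhalf
            _ = _ := by rw [neg_sub, sub_neg_eq_add, add_comm]
  have hlt' : γ ^ q * (n : ℝ) ^ (-β - 1) <
      (A * β * p * 2 ^ (β + 1) * γ + B) * (n : ℝ) ^ (-β - 1) :=
    calc γ ^ q * (n : ℝ) ^ (-β - 1) = (γ * (n : ℝ) ^ (-β)) ^ q := hpow.symm
      _ < s n ^ q := rpow_lt_rpow (by positivity) hlt (by linarith)
      _ ≤ A * (s (n - p) - s n) + B * (n : ℝ) ^ (-β - 1) := hrec
      _ ≤ A * γ * (((n - p : ℕ) : ℝ) ^ (-β) - (n : ℝ) ^ (-β)) + B * (n : ℝ) ^ (-β - 1) := by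
        nlinarith
      _ ≤ A * γ * (β * p * (2 ^ (β + 1) * (n : ℝ) ^ (-β - 1))) + B * (n : ℝ) ^ (-β - 1) := by
        gcongr
      _ = _ := by ring
  have hγq : γ ^ q = γ * γ ^ (q - 1) := by
    rw [← rpow_one_add' (by linarith) (by linarith)]
    ring_nf
  have := lt_of_mul_lt_mul_right hlt' (by positivity)
  nlinarith

theorem exists_eventually_le_mul_rpow_of_rpow_le_sub {q A B : ℝ} {p : ℕ} {s : ℕ → ℝ}
    (hq : 1 < q) (hA : 0 ≤ A) (hB : 0 ≤ B) (hp : 0 < p) (hs : Antitone s)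
    (hrec : ∀ᶠ n : ℕ in atTop, s n ^ q ≤ A * (s (n - p) - s n) + B * (n : ℝ) ^ (q / (1 - q))) :
    ∃ γ : ℝ, 0 < γ ∧ ∀ᶠ n : ℕ in atTop, s n ≤ γ * (n : ℝ) ^ (1 / (1 - q)) := by
  set β := 1 / (q - 1) with hβdef
  have hq1 : q - 1 ≠ 0 := by linarith
  have hβ : β * (q - 1) = 1 := by rw [hβdef]; field_simp
  have hβ0 : 0 ≤ β := by positivity
  have hexp : 1 / (1 - q) = -β := by
    rw [hβdef, ← neg_sub, div_neg]
  have hexp' : q / (1 - q) = -β - 1 := by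
    rw [hβdef, ← neg_sub, div_neg]; field_simp; ring
  obtain ⟨N, hN⟩ := eventually_atTop.mp hrec
  set N₀ := max N (2 * p)
  set c := A * β * p * 2 ^ (β + 1) + B
  set γ := max (max 1 (s N₀ * ((N₀ + p : ℕ) : ℝ) ^ β)) (c ^ β)
  have hγ1 : 1 ≤ γ := le_max_of_le_left (le_max_left _ _)
  have hγc : c ≤ γ ^ (q - 1) :=
    calc c = (c ^ β) ^ (q - 1) := by rw [← rpow_mul (by positivity), hβ, rpow_one]
      _ ≤ γ ^ (q - 1) := by gcongr; exact le_max_right _ _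
  have hbase : s N₀ ≤ γ * ((N₀ + p : ℕ) : ℝ) ^ (-β) := by
    have hpos : (0 : ℝ) < ((N₀ + p : ℕ) : ℝ) := by positivity
    rw [rpow_neg hpos.le, ← div_eq_mul_inv, le_div_iff₀ (by positivity)]
    exact le_max_of_le_left (le_max_right _ _)
  have hbound : ∀ n, N₀ ≤ n → s n ≤ γ * (n : ℝ) ^ (-β) := by
    intro n
    induction n using Nat.strong_induction_on with
    | _ n ih =>
      intro hn
      have hn0 : 0 < n := by omega
      by_cases hnp : n < N₀ + p
      · calc s n ≤ s N₀ := hs hn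
          _ ≤ γ * ((N₀ + p : ℕ) : ℝ) ^ (-β) := hbase
          _ ≤ γ * (n : ℝ) ^ (-β) := mul_le_mul_of_nonneg_left (rpow_le_rpow_of_nonpos
              (Nat.cast_pos.mpr hn0) (Nat.cast_le.mpr hnp.le) (neg_nonpos.mpr hβ0)) (by positivity)
      · refine le_mul_rpow_of_rpow_le_sub hq hβ hA hB hγ1 hγc hn0 (by omega)
          (ih _ (by omega) (by omega)) ?_
        rw [← hexp']
        exact hN n (by omega)
  exact ⟨γ, by linarith, eventually_atTop.mpr ⟨N₀, fun n hn ↦ hexp ▸ hbound n hn⟩⟩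

section RelaxedDescent

variable {φ C τs : ℕ → ℝ} {τ : ℝ}

theorem mul_sub_le_sub_succ
    (hCrec : ∀ k, C (k + 1) = (1 - τs (k + 1)) * C k + τs (k + 1) * φ (k + 1))
    (hτs : ∀ k, τs (k + 1) ∈ Icc τ 1) (hφC : ∀ k, φ (k + 1) ≤ C k) (k : ℕ) :
    τ * (C k - φ (k + 1)) ≤ C k - C (k + 1) := by
  rw [hCrec k]
  nlinarith [(hτs k).1, hφC k]

theorem antitone_of_mul_sub_le_sub_succ (hτ : 0 ≤ τ) (hφC : ∀ k, φ (k + 1) ≤ C k)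
    (hstep : ∀ k, τ * (C k - φ (k + 1)) ≤ C k - C (k + 1)) : Antitone C :=
  antitone_nat_of_succ_le fun k ↦ by nlinarith [hstep k, hφC k]

theorem le_of_forall_le_of_convex_comb {M : ℝ} (hC0 : C 0 = φ 0)
    (hCrec : ∀ k, C (k + 1) = (1 - τs (k + 1)) * C k + τs (k + 1) * φ (k + 1))
    (hτs : ∀ k, τs (k + 1) ∈ Icc 0 1) (hM : ∀ k, M ≤ φ k) (k : ℕ) : M ≤ C k := by
  induction k with
  | zero => exact hC0 ▸ hM 0
  | succ k ih =>
    rw [hCrec k]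
    nlinarith [(hτs k).1, (hτs k).2, hM (k + 1)]

theorem exists_tendsto_of_mul_sub_le_sub_succ {M : ℝ} (hτ : 0 < τ) (hC : Antitone C)
    (hφC : ∀ k, φ (k + 1) ≤ C k) (hstep : ∀ k, τ * (C k - φ (k + 1)) ≤ C k - C (k + 1))
    (hM : ∀ k, M ≤ C k) : ∃ L, Tendsto C atTop (𝓝 L) ∧ Tendsto φ atTop (𝓝 L) := by
  have hCL := tendsto_atTop_ciInf hC ⟨M, forall_mem_range.mpr hM⟩
  refine ⟨_, hCL, (tendsto_add_atTop_iff_nat 1).mp ?_⟩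
  have hlower : Tendsto (fun k ↦ C k - (C k - C (k + 1)) / τ) atTop (𝓝 (⨅ k, C k)) := by
    simpa using hCL.sub ((hCL.sub (hCL.comp (tendsto_add_atTop_nat 1))).div_const τ)
  refine tendsto_of_tendsto_of_tendsto_of_le_of_le hlower hCL (fun k ↦ ?_) hφC
  have := hstep k
  rw [sub_le_comm, le_div_iff₀ hτ]
  linarith

end RelaxedDescent

theorem eq_of_tendsto_of_limsup_le_of_lowerSemicontinuousAt {X ι : Type*} [TopologicalSpace X]
    {l : Filter ι} [l.NeBot] {Φ : X → ℝ} {u : ι → X} {xbar : X} {L : ℝ}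
    (hu : Tendsto u l (𝓝 xbar)) (hΦu : Tendsto (fun j ↦ Φ (u j)) l (𝓝 L))
    (hlimsup : limsup (fun j ↦ Φ (u j)) l ≤ Φ xbar) (hlsc : LowerSemicontinuousAt Φ xbar) :
    L = Φ xbar :=
  le_antisymm (hΦu.limsup_eq ▸ hlimsup) <| le_of_forall_lt_imp_le_of_dense fun y hy ↦
    ge_of_tendsto hΦu ((hu.eventually (hlsc y hy)).mono fun _ h ↦ h.le)

theorem rpow_sub_le_of_kl {C : ℕ → ℝ} {φk c τ θ κ e : ℝ} {k k₁ : ℕ} (hC : Antitone C)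
    (hτ0 : 0 < τ) (hτ1 : τ ≤ 1) (hθ0 : 1 / 2 ≤ θ) (hθ1 : θ ≤ 1) (hκ : 0 ≤ κ)
    (hc : c ≤ C (k + k₁)) (hΔ1 : C (k - k₁ - 1) - C (k + k₁) ≤ 1)
    (hstep : τ * (C (k - 1) - φk) ≤ C (k - 1) - C k)
    (hKL : c < φk → (φk - c) ^ θ ≤
      κ * ((∑ i ∈ Finset.Icc (k - k₁) (k + k₁), √(C (i - 1) - C i)) + e)) :
    (C (k + k₁) - c) ^ (2 * θ) ≤ (2 / τ ^ 2 + 4 * κ ^ 2 * (2 * k₁ + 1) ^ 2) *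
      (C (k - k₁ - 1) - C (k + k₁)) + 4 * κ ^ 2 * e ^ 2 := by
  set Δ := C (k - k₁ - 1) - C (k + k₁)
  have hΔ0 : 0 ≤ Δ := sub_nonneg.mpr (hC (by omega))
  set d := max (φk - c) 0
  -- the descent step controls `C (k - 1) - φk`, the KL inequality controls `d`
  have hr : C (k + k₁) - c ≤ Δ / τ + d := by
    have h1 : C (k + k₁) ≤ C (k - 1) := hC (by omega)
    have h2 : C (k - 1) ≤ C (k - k₁ - 1) := hC (by omega)
    have h3 : C (k + k₁) ≤ C k := hC (by omega)
    have h4 : C (k - 1) - φk ≤ Δ / τ := by rw [le_div_iff₀ hτ0]; linarith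
    linarith [le_max_left (φk - c) 0]
  have hd : d ^ (2 * θ) ≤ 2 * κ ^ 2 * ((2 * k₁ + 1) ^ 2 * Δ + e ^ 2) := by
    by_cases hφk : c < φk
    · rw [show d = φk - c from max_eq_left (by linarith)]
      refine rpow_two_mul_le_of_rpow_le (by linarith) hκ hΔ0 (hKL hφk)
        ((sum_sqrt_sub_le hC _ _).trans ?_)
      gcongr
      exact_mod_cast (by omega : k + k₁ + 1 - (k - k₁) ≤ 2 * k₁ + 1)
    · rw [show d = 0 from max_eq_right (by linarith), zero_rpow (by positivity)]
      positivity
  calc (C (k + k₁) - c) ^ (2 * θ) ≤ (Δ / τ + d) ^ (2 * θ) :=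
        rpow_le_rpow (by linarith) hr (by positivity)
    _ ≤ 2 * ((Δ / τ) ^ (2 * θ) + d ^ (2 * θ)) :=
        rpow_add_le_two_mul (by positivity) (le_max_right _ _) (by linarith) (by linarith)
    _ ≤ 2 * (Δ / τ ^ 2 + 2 * κ ^ 2 * ((2 * k₁ + 1) ^ 2 * Δ + e ^ 2)) := by
        gcongr
        exact div_rpow_le_div_sq hΔ0 hΔ1 hτ0 hτ1 (by linarith) (by linarith)
    _ = _ := by ring

theorem exists_eventually_rpow_sub_le_of_kl {φ C ε : ℕ → ℝ} {τ c θ κ γ : ℝ} {k₁ : ℕ}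
    (hC : Antitone C) (hstep : ∀ k, τ * (C k - φ (k + 1)) ≤ C k - C (k + 1))
    (hCc : Tendsto C atTop (𝓝 c)) (hτ0 : 0 < τ) (hτ1 : τ ≤ 1) (hθ0 : 1 / 2 < θ) (hθ1 : θ ≤ 1)
    (hκ : 0 ≤ κ) (hε : ∀ᶠ k in atTop, 0 ≤ ε k)
    (hεdecay : ∀ᶠ k in atTop, ε k ≤ γ * (k : ℝ) ^ (θ / (1 - 2 * θ)))
    (hKL : ∀ᶠ k in atTop, c < φ k → (φ k - c) ^ θ ≤
      κ * ((∑ i ∈ Finset.Icc (k - k₁) (k + k₁), √(C (i - 1) - C i)) + ε k)) :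
    ∃ A B : ℝ, 0 ≤ A ∧ 0 ≤ B ∧ ∀ᶠ n : ℕ in atTop, (C n - c) ^ (2 * θ) ≤
      A * ((C (n - (2 * k₁ + 1)) - c) - (C n - c)) + B * (n : ℝ) ^ (2 * θ / (1 - 2 * θ)) := by
  have hc : ∀ n, c ≤ C n := hC.le_of_tendsto hCc
  have hexp : 2 * θ / (1 - 2 * θ) ≤ 0 :=
    div_nonpos_of_nonneg_of_nonpos (by linarith) (by linarith)
  have hshift := tendsto_sub_atTop_nat k₁
  refine ⟨2 / τ ^ 2 + 4 * κ ^ 2 * (2 * k₁ + 1) ^ 2,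
    4 * κ ^ 2 * γ ^ 2 * 2 ^ (-(2 * θ / (1 - 2 * θ))), by positivity, by positivity, ?_⟩
  filter_upwards [eventually_ge_atTop (2 * k₁ + 1), hshift.eventually hε,
    hshift.eventually hεdecay, hshift.eventually hKL,
    (tendsto_sub_atTop_nat (2 * k₁ + 1)).eventually (hCc.eventually (eventually_le_nhds
      (lt_add_one c)))] with n hn hεk hεdecayk hKLk hsmall
  obtain ⟨k, rfl⟩ : ∃ k, n = k + k₁ := ⟨n - k₁, by omega⟩
  rw [Nat.add_sub_cancel] at hεk hεdecayk hKLk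
  rw [show k + k₁ - (2 * k₁ + 1) = k - k₁ - 1 by omega] at hsmall ⊢
  have hstepk : τ * (C (k - 1) - φ k) ≤ C (k - 1) - C k := by
    simpa [Nat.sub_add_cancel (by omega : 1 ≤ k)] using hstep (k - 1)
  have hmain := rpow_sub_le_of_kl hC hτ0 hτ1 hθ0.le hθ1 hκ (hc _)
    (by linarith [hc (k + k₁)]) hstepk hKLk
  have hkpos : (0 : ℝ) < k := by exact_mod_cast (by omega : 0 < k)
  have hεsq : ε k ^ 2 ≤ γ ^ 2 * (2 ^ (-(2 * θ / (1 - 2 * θ))) *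
      ((k + k₁ : ℕ) : ℝ) ^ (2 * θ / (1 - 2 * θ))) := by
    calc ε k ^ 2 ≤ (γ * (k : ℝ) ^ (θ / (1 - 2 * θ))) ^ 2 := pow_le_pow_left₀ hεk hεdecayk 2
      _ = γ ^ 2 * (k : ℝ) ^ (2 * θ / (1 - 2 * θ)) := by
        rw [mul_pow, ← rpow_mul_natCast hkpos.le]
        ring_nf
      _ ≤ _ := by
        gcongr
        refine rpow_le_two_rpow_mul_of_half_le hexp (by exact_mod_cast (by omega : 0 < k + k₁)) ?_
        push_cast
        have : (k₁ : ℝ) ≤ k := by exact_mod_cast (by omega : k₁ ≤ k)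
        linarith
  calc _ ≤ _ := hmain
    _ ≤ _ := by
      nlinarith [mul_le_mul_of_nonneg_left hεsq (by positivity : (0 : ℝ) ≤ 4 * κ ^ 2)]

theorem stmt_10_general {X : Type*} [NormedAddCommGroup X]
    (Φ : X → ℝ) (x : ℕ → X) (a τs C : ℕ → ℝ) (abar τ : ℝ)
    (habar : 0 < abar) (hτ0 : 0 < τ) (hτ1 : τ ≤ 1)
    (ha : ∀ k : ℕ, abar ≤ a (k + 1))
    (hτs : ∀ k : ℕ, τs (k + 1) ∈ Set.Icc τ 1)
    (hC0 : C 0 = Φ (x 0))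
    (hCrec : ∀ k : ℕ, C (k + 1) = (1 - τs (k + 1)) * C k + τs (k + 1) * Φ (x (k + 1)))
    (hH1 : ∀ k : ℕ, Φ (x (k + 1)) + a (k + 1) * ‖x (k + 1) - x k‖ ^ 2 ≤ C k)
    (hbdd : ∃ M : ℝ, ∀ k : ℕ, M ≤ Φ (x k))
    -- condition H3 and lower semicontinuity at x̄
    (xbar : X) (ks : ℕ → ℕ) (hks : StrictMono ks)
    (hxconv : Filter.Tendsto (fun j => x (ks j)) Filter.atTop (nhds xbar))
    (hlimsup : Filter.limsup (fun j => Φ (x (ks j))) Filter.atTop ≤ Φ xbar)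
    (hlsc : LowerSemicontinuousAt Φ xbar)
    -- exponent and error sequence
    (θ : ℝ) (hθ0 : 1 / 2 < θ) (hθ : θ < 1)
    (eps : ℕ → ℝ) (heps : ∀ k : ℕ, 1 ≤ k → 0 ≤ eps k)
    (ktil0 : ℕ) (γtil : ℝ)
    (hepsdecay : ∀ k : ℕ, ktil0 ≤ k → eps k ≤ γtil * (k : ℝ) ^ (θ / (1 - 2 * θ)))
    -- surrogate KL inequality of exponent θ along the sequence
    (κ : ℝ) (hκ : 0 < κ) (k1 ktil : ℕ)
    (hKL : ∀ k : ℕ, ktil ≤ k → Φ xbar < Φ (x k) →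
      (Φ (x k) - Φ xbar) ^ θ ≤
        κ * ((∑ i ∈ Finset.Icc (k - k1) (k + k1), Real.sqrt (C (i - 1) - C i)) + eps k)) :
    ∃ γ : ℝ, 0 < γ ∧
      ∀ᶠ k in Filter.atTop, C k - Φ xbar ≤ γ * (k : ℝ) ^ (1 / (1 - 2 * θ)) := by
  obtain ⟨M, hM⟩ := hbdd
  set φ : ℕ → ℝ := fun k ↦ Φ (x k)
  have hφC : ∀ k, φ (k + 1) ≤ C k := fun k ↦ by
    nlinarith [hH1 k, ha k, sq_nonneg ‖x (k + 1) - x k‖]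
  have hstep := mul_sub_le_sub_succ (φ := φ) hCrec hτs hφC
  have hC := antitone_of_mul_sub_le_sub_succ hτ0.le hφC hstep
  have hτs₀ : ∀ k, τs (k + 1) ∈ Icc 0 1 := fun k ↦ ⟨hτ0.le.trans (hτs k).1, (hτs k).2⟩
  obtain ⟨L, hCL, hφL⟩ := exists_tendsto_of_mul_sub_le_sub_succ hτ0 hC hφC hstep
    (le_of_forall_le_of_convex_comb (φ := φ) hC0 hCrec hτs₀ hM)
  obtain rfl : L = Φ xbar := eq_of_tendsto_of_limsup_le_of_lowerSemicontinuousAt hxconv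
    (hφL.comp hks.tendsto_atTop) hlimsup hlsc
  obtain ⟨A, B, hA, hB, hrec⟩ := exists_eventually_rpow_sub_le_of_kl hC hstep hCL hτ0 hτ1 hθ0
    hθ.le hκ.le (eventually_atTop.mpr ⟨1, heps⟩) (eventually_atTop.mpr ⟨ktil0, hepsdecay⟩)
    (eventually_atTop.mpr ⟨ktil, hKL⟩)
  exact exists_eventually_le_mul_rpow_of_rpow_le_sub (by linarith) hA hB (Nat.succ_pos _)
    (fun _ _ h ↦ sub_le_sub_right (hC h) _) hrec

/-- Lemma 3.4, case `θ ∈ (1/2,1)`: under conditions H1, H3 and lsc of `Φ` at `x̄`,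
if `ε_k ≤ γ̃·k^{θ/(1−2θ)}` eventually and the surrogate KL-type inequality
`(Φ(x^k) − Φ(x̄))^θ ≤ κ·(Σ_{i=k−k1}^{k+k1} Ξ_{i−1} + ε_k)` holds for all large `k`
with `Φ(x^k) > Φ(x̄)`, then `C_k − Φ(x̄) ≤ γ·k^{1/(1−2θ)}` for large `k`. -/
theorem stmt_10 {X : Type*} [NormedAddCommGroup X] [NormedSpace ℝ X]
    (Φ : X → ℝ) (x : ℕ → X) (a τs C : ℕ → ℝ) (abar τ : ℝ)
    (habar : 0 < abar) (hτ0 : 0 < τ) (hτ1 : τ ≤ 1)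
    (ha : ∀ k : ℕ, abar ≤ a (k + 1))
    (hτs : ∀ k : ℕ, τs (k + 1) ∈ Set.Icc τ 1)
    (hC0 : C 0 = Φ (x 0))
    (hCrec : ∀ k : ℕ, C (k + 1) = (1 - τs (k + 1)) * C k + τs (k + 1) * Φ (x (k + 1)))
    (hH1 : ∀ k : ℕ, Φ (x (k + 1)) + a (k + 1) * ‖x (k + 1) - x k‖ ^ 2 ≤ C k)
    (hbdd : ∃ M : ℝ, ∀ k : ℕ, M ≤ Φ (x k))
    -- condition H3 and lower semicontinuity at x̄
    (xbar : X) (ks : ℕ → ℕ) (hks : StrictMono ks)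
    (hxconv : Filter.Tendsto (fun j => x (ks j)) Filter.atTop (nhds xbar))
    (hlimsup : Filter.limsup (fun j => Φ (x (ks j))) Filter.atTop ≤ Φ xbar)
    (hlsc : LowerSemicontinuousAt Φ xbar)
    -- exponent and error sequence
    (θ : ℝ) (hθ0 : 1 / 2 < θ) (hθ : θ < 1)
    (eps : ℕ → ℝ) (heps : ∀ k : ℕ, 1 ≤ k → 0 ≤ eps k)
    (ktil0 : ℕ) (γtil : ℝ) (hγtil : 0 < γtil)
    (hepsdecay : ∀ k : ℕ, ktil0 ≤ k → eps k ≤ γtil * (k : ℝ) ^ (θ / (1 - 2 * θ)))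
    -- surrogate KL inequality of exponent θ along the sequence
    (κ : ℝ) (hκ : 0 < κ) (k1 ktil : ℕ) (hktil : k1 ≤ ktil)
    (hKL : ∀ k : ℕ, ktil ≤ k → Φ xbar < Φ (x k) →
      (Φ (x k) - Φ xbar) ^ θ ≤
        κ * ((∑ i ∈ Finset.Icc (k - k1) (k + k1), Real.sqrt (C (i - 1) - C i)) + eps k)) :
    ∃ γ : ℝ, 0 < γ ∧
      ∀ᶠ k in Filter.atTop, C k - Φ xbar ≤ γ * (k : ℝ) ^ (1 / (1 - 2 * θ)) :=
  stmt_10_general Φ x a τs C abar τ habar hτ0 hτ1 ha hτs hC0 hCrec hH1 hbdd xbar ks hks hxconv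
    hlimsup hlsc θ hθ0 hθ eps heps ktil0 γtil hepsdecay κ hκ k1 ktil hKL
end

section
/- Let θ ∈ (0, 1/2]. Suppose {x^k}_{k≥0} satisfies conditions H1 and H3, Φ is lower semicontinuous at the point x̄ from condition H3, and surrogate H2 data (k1, {b_k}, {ε_k}) are given with, in addition, ε_k ≤ γ̃·ρ̃^k for all k ≥ k̃₀, for some k̃₀ ∈ ℕ, γ̃ > 0 and ρ̃ ∈ (0,1). Suppose further that there exist c > 0, δ > 0 and η > 0 such that for every k ≥ k1 with ‖x^k − x̄‖ ≤ δ and Φ(x̄) < Φ(x^k) < Φ(x̄) + η one has c·(1−θ)·(Φ(x^k) − Φ(x̄))^{−θ} · ( (1/b_k)·Σ_{i=k−k1}^{k+k1} ‖x^i − x^{i−1}‖ + ε_k ) ≥ 1. Then {x^k} converges to x̄, and there exist γ > 0 and ϱ ∈ (0,1) such that for all sufficiently large k: ‖x^k − x̄‖ ≤ Σ_{j=k}^∞ ‖x^{j+1} − x^j‖ ≤ γ·ϱ^k. -/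
open Filter

private lemma sqAddSqAux (x y : ℝ) : (x + y) ^ 2 ≤ 2 * x ^ 2 + 2 * y ^ 2 := by
  nlinarith [sq_nonneg (x - y)]

private lemma sqrtPowAux (x : ℝ) (hx : 0 ≤ x) : ∀ n : ℕ,
    Real.sqrt (x ^ n) = (Real.sqrt x) ^ n := by
  intro n
  induction n with
  | zero => simp
  | succ n ih => rw [pow_succ, pow_succ, Real.sqrt_mul (pow_nonneg hx n), ih]

private lemma telescopeAux {X : Type*} [NormedAddCommGroup X] (x : ℕ → X) (N : ℕ) :
    ∀ n : ℕ, ‖x (N + n) - x N‖ ≤ ∑ i ∈ Finset.range n, ‖x (N + i + 1) - x (N + i)‖ := by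
  intro n
  induction n with
  | zero => simp
  | succ n ih =>
    rw [Finset.sum_range_succ]
    have h3 : ‖x (N + n + 1) - x N‖ ≤ ‖x (N + n + 1) - x (N + n)‖ + ‖x (N + n) - x N‖ := by
      have := dist_triangle (x (N + n + 1)) (x (N + n)) (x N)
      simpa [dist_eq_norm] using this
    have he : N + (n + 1) = N + n + 1 := rfl
    rw [he]
    linarith

set_option maxHeartbeats 1000000 in
/-- Theorem 3.5, case `θ ∈ (0,1/2]`: under conditions H1, H3, lsc of `Φ` at `x̄`,
surrogate H2 data with geometrically decaying errors, and the surrogate KL inequality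
of exponent `θ` (desingularizing function `φ(t) = c·t^{1−θ}`) along the sequence,
the sequence converges to `x̄` at an R-linear rate. -/
theorem stmt_11 {X : Type*} [NormedAddCommGroup X] [NormedSpace ℝ X]
    (Φ : X → ℝ) (x : ℕ → X) (a τs C : ℕ → ℝ) (abar τ : ℝ)
    (habar : 0 < abar) (hτ0 : 0 < τ) (hτ1 : τ ≤ 1)
    (ha : ∀ k : ℕ, abar ≤ a (k + 1))
    (hτs : ∀ k : ℕ, τs (k + 1) ∈ Set.Icc τ 1)
    (hC0 : C 0 = Φ (x 0))
    (hCrec : ∀ k : ℕ, C (k + 1) = (1 - τs (k + 1)) * C k + τs (k + 1) * Φ (x (k + 1)))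
    (hH1 : ∀ k : ℕ, Φ (x (k + 1)) + a (k + 1) * ‖x (k + 1) - x k‖ ^ 2 ≤ C k)
    (hbdd : ∃ M : ℝ, ∀ k : ℕ, M ≤ Φ (x k))
    -- condition H3 and lower semicontinuity at x̄
    (xbar : X) (ks : ℕ → ℕ) (hks : StrictMono ks)
    (hxconv : Filter.Tendsto (fun j => x (ks j)) Filter.atTop (nhds xbar))
    (hlimsup : Filter.limsup (fun j => Φ (x (ks j))) Filter.atTop ≤ Φ xbar)
    (hlsc : LowerSemicontinuousAt Φ xbar)
    -- surrogate H2 data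
    (k1 : ℕ) (b eps : ℕ → ℝ)
    (hb : ∀ k : ℕ, k1 ≤ k → 0 < b k)
    (heps : ∀ k : ℕ, 1 ≤ k → 0 ≤ eps k)
    (hepssum : Summable eps)
    (Bbar : ℝ)
    (hBbar : ∀ k : ℕ, k1 ≤ k →
      (1 / b k) * ∑ i ∈ Finset.Icc (k - k1) (k + k1), 1 / Real.sqrt (a i) ≤ Bbar)
    -- exponent and decay of the error sequence
    (θ : ℝ) (hθ0 : 0 < θ) (hθ : θ ≤ 1 / 2)
    (ktil0 : ℕ) (γtil ρtil : ℝ) (hγtil : 0 < γtil) (hρtil : ρtil ∈ Set.Ioo (0 : ℝ) 1)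
    (hepsdecay : ∀ k : ℕ, ktil0 ≤ k → eps k ≤ γtil * ρtil ^ k)
    -- surrogate KL inequality of exponent θ along the sequence
    (c δ η : ℝ) (hc : 0 < c) (hδ : 0 < δ) (hη : 0 < η)
    (hKL : ∀ k : ℕ, k1 ≤ k → ‖x k - xbar‖ ≤ δ → Φ xbar < Φ (x k) → Φ (x k) < Φ xbar + η →
      1 ≤ c * (1 - θ) * (Φ (x k) - Φ xbar) ^ (-θ) *
        ((1 / b k) * (∑ i ∈ Finset.Icc (k - k1) (k + k1), ‖x i - x (i - 1)‖) + eps k)) :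
    Filter.Tendsto x Filter.atTop (nhds xbar) ∧
      Summable (fun k => ‖x (k + 1) - x k‖) ∧
      ∃ γ : ℝ, 0 < γ ∧ ∃ ϱ ∈ Set.Ioo (0 : ℝ) 1,
        ∀ᶠ k in Filter.atTop,
          ‖x k - xbar‖ ≤ ∑' j : ℕ, ‖x (k + j + 1) - x (k + j)‖ ∧
          ∑' j : ℕ, ‖x (k + j + 1) - x (k + j)‖ ≤ γ * ϱ ^ k := by
  obtain ⟨M, hM⟩ := hbdd
  obtain ⟨hρt0, hρt1⟩ := hρtil
  -- ## Basic consequences of H1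
  have hgap0 : ∀ k : ℕ, Φ (x (k+1)) ≤ C k := by
    intro k
    have h1 := hH1 k
    have h2 : 0 ≤ a (k+1) * ‖x (k+1) - x k‖ ^ 2 :=
      mul_nonneg (le_trans habar.le (ha k)) (sq_nonneg _)
    linarith
  have hCdiff : ∀ k : ℕ, C k - C (k+1) = τs (k+1) * (C k - Φ (x (k+1))) := by
    intro k; rw [hCrec k]; ring
  have hCmono : ∀ k : ℕ, C (k+1) ≤ C k := by
    intro k
    have h1 := hCdiff k
    have h2 := hgap0 k
    have h3 := (hτs k).1
    nlinarith
  have hCanti : Antitone C := antitone_nat_of_succ_le hCmono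
  have hΦC : ∀ k : ℕ, Φ (x k) ≤ C k := by
    intro k
    cases k with
    | zero => rw [hC0]
    | succ k =>
      have h1 := hgap0 k
      have h2 := (hτs k).2
      rw [hCrec k]; nlinarith
  have hCM : ∀ k, M ≤ C k := fun k => (hM k).trans (hΦC k)
  have hbddC : BddBelow (Set.range C) := by
    refine ⟨M, ?_⟩; rintro y ⟨k, rfl⟩; exact hCM k
  set L := ⨅ i, C i with hLdef
  have hCL : Tendsto C atTop (nhds L) := tendsto_atTop_ciInf hCanti hbddC
  have hLC : ∀ k, L ≤ C k := fun k => ciInf_le hbddC k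
  clear_value L
  have hgapτ : ∀ k : ℕ, C k - Φ (x (k+1)) ≤ (C k - C (k+1)) / τ := by
    intro k
    rw [le_div_iff₀ hτ0, hCdiff k]
    have h2 := hgap0 k
    have h3 := (hτs k).1
    nlinarith
  have hdiff0 : Tendsto (fun k => C k - C (k+1)) atTop (nhds 0) := by
    have h1 : Tendsto (fun k => C (k+1)) atTop (nhds L) := (tendsto_add_atTop_iff_nat 1).2 hCL
    simpa using hCL.sub h1
  have hΦL : Tendsto (fun k => Φ (x k)) atTop (nhds L) := by
    apply (tendsto_add_atTop_iff_nat 1).1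
    apply tendsto_of_tendsto_of_tendsto_of_le_of_le
      (g := fun k => C k - (C k - C (k+1)) / τ) (h := C)
    · simpa using hCL.sub (hdiff0.div_const τ)
    · exact hCL
    · intro k; have := hgapτ k; linarith
    · exact hgap0
  have hΦsub : Tendsto (fun j => Φ (x (ks j))) atTop (nhds L) := hΦL.comp hks.tendsto_atTop
  have hL1 : L ≤ Φ xbar := by rw [← hΦsub.limsup_eq]; exact hlimsup
  have hL2 : Φ xbar ≤ L := by
    by_contra h
    push_neg at h
    set y := (L + Φ xbar) / 2 with hy
    have hy1 : y < Φ xbar := by rw [hy]; linarith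
    have hev : ∀ᶠ j in atTop, y < Φ (x (ks j)) := hxconv.eventually (hlsc y hy1)
    have : y ≤ L := ge_of_tendsto hΦsub (hev.mono fun j hj => hj.le)
    rw [hy] at this; linarith
  have hLeq : L = Φ xbar := le_antisymm hL1 hL2
  -- ## The merit gap D
  set D : ℕ → ℝ := fun k => C k - Φ xbar with hDdef
  have hD0 : ∀ k, 0 ≤ D k := fun k => sub_nonneg.2 (hLeq ▸ hLC k)
  have hDanti : ∀ i j : ℕ, i ≤ j → D j ≤ D i := fun i j h => sub_le_sub_right (hCanti h) _
  have hDlim : Tendsto D atTop (nhds 0) := by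
    have := hCL.sub_const (Φ xbar)
    rwa [hLeq, sub_self] at this
  have hDrec : ∀ k : ℕ, D (k + 1) = (1 - τs (k + 1)) * D k
      + τs (k + 1) * (Φ (x (k + 1)) - Φ xbar) := by
    intro k; simp only [hDdef]; rw [hCrec k]; ring
  have hDeq : ∀ k : ℕ, D k - D (k + 1) = C k - C (k + 1) := by
    intro k; simp only [hDdef]; ring
  clear_value D
  have hdisp : ∀ k : ℕ, a (k+1) * ‖x (k+1) - x k‖ ^ 2 ≤ (D k - D (k+1)) / τ := by
    intro k
    have h1 := hH1 k
    have h2 := hgapτ k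
    rw [hDeq k]
    linarith
  have hdisp' : ∀ k : ℕ, ‖x (k+1) - x k‖ ≤ Real.sqrt (D k) / Real.sqrt (τ * abar) := by
    intro k
    rw [← Real.sqrt_div (hD0 k)]
    rw [Real.le_sqrt (norm_nonneg _) (div_nonneg (hD0 k) (by positivity))]
    have h1 := hdisp k
    have h2 : D (k+1) ≥ 0 := hD0 _
    have h3 := ha k
    have h4 : abar * ‖x (k+1) - x k‖ ^ 2 ≤ a (k+1) * ‖x (k+1) - x k‖ ^ 2 :=
      mul_le_mul_of_nonneg_right h3 (sq_nonneg _)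
    rw [le_div_iff₀ (by positivity)]
    rw [le_div_iff₀ hτ0] at h1
    nlinarith
  -- ## Constants
  set c' := c * (1 - θ) with hc'def
  clear_value c'
  have hc' : 0 < c' := by rw [hc'def]; exact mul_pos hc (by linarith)
  have hB0 : 0 ≤ Bbar := by
    refine le_trans ?_ (hBbar k1 le_rfl)
    have h1 : (0:ℝ) ≤ 1 / b k1 := div_nonneg zero_le_one (hb k1 le_rfl).le
    have h2 : (0:ℝ) ≤ ∑ i ∈ Finset.Icc (k1 - k1) (k1 + k1), 1 / Real.sqrt (a i) :=
      Finset.sum_nonneg fun i _ => by positivity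
    exact mul_nonneg h1 h2
  set A := 2 * c' ^ 2 * Bbar ^ 2 / τ with hAdef
  clear_value A
  have hA0 : 0 ≤ A := by rw [hAdef]; positivity
  set q := ρtil ^ 2 with hqdef
  clear_value q
  have hq0 : 0 < q := by rw [hqdef]; positivity
  have hq1 : q < 1 := by
    rw [hqdef]; exact pow_lt_one₀ hρt0.le hρt1 (by omega)
  set E1 := 2 * c' ^ 2 * γtil ^ 2 with hE1def
  clear_value E1
  have hE1 : 0 < E1 := by rw [hE1def]; positivity
  set ρZ := (1 + A - τ) / (1 + A) with hρZdef
  clear_value ρZ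
  have h1A : (0:ℝ) < 1 + A := by linarith
  have hρZ0 : 0 ≤ ρZ := by
    rw [hρZdef]; exact div_nonneg (by linarith) h1A.le
  have hρZ1 : ρZ < 1 := by
    rw [hρZdef, div_lt_one h1A]; linarith
  have hτρZ : 1 - τ ≤ ρZ := by
    rw [hρZdef, le_div_iff₀ h1A]; nlinarith
  set ρh := (1 + max ρZ q) / 2 with hρhdef
  clear_value ρh
  have hρh1 : ρh < 1 := by
    have : max ρZ q < 1 := max_lt hρZ1 hq1
    rw [hρhdef]; linarith
  have hρh0 : 0 < ρh := by
    have : 0 < max ρZ q := lt_max_of_lt_right hq0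
    rw [hρhdef]; linarith
  have hρZρh : ρZ < ρh := by
    have h1 : ρZ ≤ max ρZ q := le_max_left _ _
    have h2 : max ρZ q < 1 := max_lt hρZ1 hq1
    rw [hρhdef]; linarith
  have hqρh : q < ρh := by
    have h1 : q ≤ max ρZ q := le_max_right _ _
    have h2 : max ρZ q < 1 := max_lt hρZ1 hq1
    rw [hρhdef]; linarith
  set m := 2 * k1 + 1 with hmdef
  clear_value m
  have hm1 : 1 ≤ m := by omega
  set σ := ρh ^ ((m:ℝ)⁻¹) with hσdef
  clear_value σ
  have hσ0 : 0 < σ := by rw [hσdef]; exact Real.rpow_pos_of_pos hρh0 _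
  have hσ1 : σ < 1 := by
    rw [hσdef]
    exact Real.rpow_lt_one hρh0.le hρh1 (by positivity)
  have hσm : σ ^ m = ρh := by
    rw [hσdef, ← Real.rpow_natCast (ρh ^ ((m:ℝ)⁻¹)) m, ← Real.rpow_mul hρh0.le,
      inv_mul_cancel₀ (by positivity : (m:ℝ) ≠ 0), Real.rpow_one]
  have hqσ : q ≤ σ := by
    have h1 : σ ^ m ≤ σ ^ 1 := pow_le_pow_of_le_one hσ0.le hσ1.le (by omega)
    rw [pow_one] at h1
    rw [← hσm] at hqρh
    linarith
  set E2 := E1 / q ^ k1 with hE2def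
  clear_value E2
  have hE2 : 0 < E2 := by rw [hE2def]; exact div_pos hE1 (pow_pos hq0 k1)
  set G1 := E2 * ρh / (ρh - ρZ) with hG1def
  clear_value G1
  have hG1 : 0 < G1 := by
    rw [hG1def]; apply div_pos (mul_pos hE2 hρh0); linarith
  set s := Real.sqrt σ with hsdef
  clear_value s
  have hs0 : 0 < s := by rw [hsdef]; exact Real.sqrt_pos.2 hσ0
  have hs1 : s < 1 := by
    rw [hsdef, show (1:ℝ) = Real.sqrt 1 by simp]
    exact Real.sqrt_lt_sqrt hσ0.le hσ1
  have hsσ : ∀ j : ℕ, Real.sqrt (σ ^ j) = s ^ j := by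
    intro j; rw [hsdef]; exact sqrtPowAux σ hσ0.le j
  set W := Real.sqrt (τ * abar) with hWdef
  clear_value W
  have hW0 : 0 < W := by rw [hWdef]; exact Real.sqrt_pos.2 (by positivity)
  -- ## thresholds
  have ht0 : Tendsto (fun k => Φ (x k) - Φ xbar) atTop (nhds 0) := by
    have := hΦL.sub_const (Φ xbar)
    rwa [hLeq, sub_self] at this
  have hev1 : ∀ᶠ k in atTop, Φ (x k) - Φ xbar < min η 1 :=
    ht0.eventually_lt_const (lt_min hη one_pos)
  obtain ⟨N0, hN0⟩ := eventually_atTop.1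
    (hev1.and (eventually_ge_atTop (max ktil0 (k1 + 1))))
  -- ## KL step estimate
  have hstep : ∀ k : ℕ, N0 ≤ k → ‖x k - xbar‖ ≤ δ →
      D (k + k1) ≤ ρZ * D (k - (k1 + 1)) + E1 * q ^ k := by
    intro k hkN hball
    obtain ⟨htmin, hkmax⟩ := hN0 k hkN
    have hk1k : k1 + 1 ≤ k := le_trans (le_max_right _ _) hkmax
    have hktk : ktil0 ≤ k := le_trans (le_max_left _ _) hkmax
    obtain ⟨k', rfl⟩ : ∃ k', k = k' + 1 := ⟨k - 1, by omega⟩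
    have hidx : k' + 1 - (k1 + 1) = k' - k1 := by omega
    rw [hidx]
    have hτk := hτs k'
    set t := Φ (x (k' + 1)) - Φ xbar with htdef
    clear_value t
    have hrec : D (k' + 1) = (1 - τs (k' + 1)) * D k' + τs (k' + 1) * t := by
      rw [htdef]; exact hDrec k' 
    have huineq : D (k' + 1 + k1) ≤ D (k' - k1) := hDanti _ _ (by omega)
    set u := D (k' - k1) - D (k' + 1 + k1) with hudef
    clear_value u
    have hu0 : 0 ≤ u := by rw [hudef]; linarith
    have hqp : 0 ≤ E1 * q ^ (k' + 1) := mul_nonneg hE1.le (pow_nonneg hq0.le _)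
    have hkey : τs (k' + 1) * t ≤ A * u + E1 * q ^ (k' + 1) := by
      rcases le_or_gt t 0 with hts | hts
      · have h1 : τs (k' + 1) * t ≤ 0 :=
          mul_nonpos_of_nonneg_of_nonpos (le_trans hτ0.le hτk.1) hts
        have h2 : 0 ≤ A * u := mul_nonneg hA0 hu0
        linarith
      · -- KL case
        have ht1 : t < 1 := lt_of_lt_of_le htmin (min_le_right _ _)
        have htη : t < η := lt_of_lt_of_le htmin (min_le_left _ _)
        have hΦlt : Φ xbar < Φ (x (k' + 1)) := by
          rw [htdef] at hts; linarith
        have hΦη : Φ (x (k' + 1)) < Φ xbar + η := by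
          rw [htdef] at htη; linarith
        have hKLk := hKL (k' + 1) (by omega) hball hΦlt hΦη
        rw [← htdef] at hKLk
        set S := 1 / b (k' + 1) * ∑ i ∈ Finset.Icc (k' + 1 - k1) (k' + 1 + k1), ‖x i - x (i - 1)‖
          with hSdef
        -- bound each displacement in the window
        have hterm : ∀ i ∈ Finset.Icc (k' + 1 - k1) (k' + 1 + k1),
            ‖x i - x (i - 1)‖ ≤ Real.sqrt (u / τ) * (1 / Real.sqrt (a i)) := by
          intro i hi
          rw [Finset.mem_Icc] at hi
          obtain ⟨i', rfl⟩ : ∃ i', i = i' + 1 := ⟨i - 1, by omega⟩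
          have hsub : i' + 1 - 1 = i' := rfl
          rw [hsub]
          have h1 := hdisp i'
          have h2 : D i' - D (i' + 1) ≤ u := by
            rw [hudef]
            have ha1 := hDanti (k' - k1) i' (by omega)
            have ha2 := hDanti (i' + 1) (k' + 1 + k1) (by omega)
            linarith
          have hai : 0 < a (i' + 1) := lt_of_lt_of_le habar (ha i')
          have h4 : (D i' - D (i' + 1)) / τ ≤ u / τ := by
            gcongr
          have h3 : ‖x (i' + 1) - x i'‖ ^ 2 ≤ (u / τ) / a (i' + 1) := by
            rw [le_div_iff₀ hai]
            have hcm : ‖x (i' + 1) - x i'‖ ^ 2 * a (i' + 1)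
                = a (i' + 1) * ‖x (i' + 1) - x i'‖ ^ 2 := mul_comm _ _
            rw [hcm]
            linarith [h1, h4]
          have h5 : ‖x (i' + 1) - x i'‖ ≤ Real.sqrt ((u / τ) / a (i' + 1)) :=
            (Real.le_sqrt (norm_nonneg _) (by positivity)).2 h3
          calc ‖x (i' + 1) - x i'‖ ≤ Real.sqrt ((u / τ) / a (i' + 1)) := h5
            _ = Real.sqrt (u / τ) * (1 / Real.sqrt (a (i' + 1))) := by
                rw [Real.sqrt_div (by positivity : (0:ℝ) ≤ u / τ), div_eq_mul_inv, one_div]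
        have hbpos := hb (k' + 1) (by omega)
        have hSb : S ≤ Bbar * Real.sqrt (u / τ) := by
          have h1 : ∑ i ∈ Finset.Icc (k' + 1 - k1) (k' + 1 + k1), ‖x i - x (i - 1)‖ ≤
              Real.sqrt (u / τ) *
                ∑ i ∈ Finset.Icc (k' + 1 - k1) (k' + 1 + k1), 1 / Real.sqrt (a i) := by
            rw [Finset.mul_sum]
            exact Finset.sum_le_sum hterm
          have h3 : 1 / b (k' + 1) *
              ∑ i ∈ Finset.Icc (k' + 1 - k1) (k' + 1 + k1), 1 / Real.sqrt (a i) ≤ Bbar :=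
            hBbar (k' + 1) (by omega)
          calc S ≤ 1 / b (k' + 1) * (Real.sqrt (u / τ) *
              ∑ i ∈ Finset.Icc (k' + 1 - k1) (k' + 1 + k1), 1 / Real.sqrt (a i)) := by
                rw [hSdef]
                exact mul_le_mul_of_nonneg_left h1 (by positivity)
            _ = Real.sqrt (u / τ) * (1 / b (k' + 1) *
                ∑ i ∈ Finset.Icc (k' + 1 - k1) (k' + 1 + k1), 1 / Real.sqrt (a i)) := by ring
            _ ≤ Real.sqrt (u / τ) * Bbar :=
                mul_le_mul_of_nonneg_left h3 (Real.sqrt_nonneg _)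
            _ = Bbar * Real.sqrt (u / τ) := mul_comm _ _
        have htθpos : (0:ℝ) < t ^ θ := Real.rpow_pos_of_pos hts θ
        have h5 : t ^ θ ≤ c' * (S + eps (k' + 1)) := by
          have h6 : t ^ θ ≤ t ^ θ * (c' * t ^ (-θ) * (S + eps (k' + 1))) :=
            le_mul_of_one_le_right htθpos.le hKLk
          calc t ^ θ ≤ _ := h6
            _ = c' * (S + eps (k' + 1)) * (t ^ θ * t ^ (-θ)) := by ring
            _ = c' * (S + eps (k' + 1)) := by
                rw [← Real.rpow_add hts, add_neg_cancel, Real.rpow_zero, mul_one]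
        have h7 : Real.sqrt t ≤ t ^ θ := by
          rw [Real.sqrt_eq_rpow]
          exact Real.rpow_le_rpow_of_exponent_ge hts ht1.le hθ
        have hepsk : eps (k' + 1) ≤ γtil * ρtil ^ (k' + 1) := hepsdecay _ (by omega)
        have h8 : Real.sqrt t ≤ c' * Bbar * Real.sqrt (u / τ) + c' * (γtil * ρtil ^ (k' + 1)) := by
          have h9 := mul_le_mul_of_nonneg_left (add_le_add hSb hepsk) hc'.le
          calc Real.sqrt t ≤ t ^ θ := h7
            _ ≤ c' * (S + eps (k' + 1)) := h5
            _ ≤ c' * (Bbar * Real.sqrt (u / τ) + γtil * ρtil ^ (k' + 1)) := h9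
            _ = c' * Bbar * Real.sqrt (u / τ) + c' * (γtil * ρtil ^ (k' + 1)) := by ring
        have hsq : t ≤ A * u + E1 * q ^ (k' + 1) := by
          have h9 : Real.sqrt t ^ 2 = t := Real.sq_sqrt hts.le
          have h10 : Real.sqrt (u / τ) ^ 2 = u / τ := Real.sq_sqrt (by positivity)
          have h11 : (ρtil ^ (k' + 1)) ^ 2 = q ^ (k' + 1) := by
            rw [hqdef, ← pow_mul, ← pow_mul, mul_comm]
          have h12 : 0 ≤ Real.sqrt t := Real.sqrt_nonneg t
          calc t = Real.sqrt t ^ 2 := h9.symm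
            _ ≤ (c' * Bbar * Real.sqrt (u / τ) + c' * (γtil * ρtil ^ (k' + 1))) ^ 2 :=
                pow_le_pow_left₀ h12 h8 2
            _ ≤ 2 * (c' * Bbar * Real.sqrt (u / τ)) ^ 2
                + 2 * (c' * (γtil * ρtil ^ (k' + 1))) ^ 2 := sqAddSqAux _ _
            _ = 2 * c' ^ 2 * Bbar ^ 2 * (u / τ)
                + 2 * c' ^ 2 * γtil ^ 2 * (ρtil ^ (k' + 1)) ^ 2 := by
                have e1 : (c' * Bbar * Real.sqrt (u / τ)) ^ 2
                    = c' ^ 2 * Bbar ^ 2 * (u / τ) := by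
                  rw [mul_pow, mul_pow, h10]
                have e2 : (c' * (γtil * ρtil ^ (k' + 1))) ^ 2
                    = c' ^ 2 * (γtil ^ 2 * (ρtil ^ (k' + 1)) ^ 2) := by
                  rw [mul_pow, mul_pow]
                rw [e1, e2]; ring
            _ = A * u + E1 * q ^ (k' + 1) := by rw [hAdef, hE1def, h11]; ring
        have hτst : τs (k' + 1) * t ≤ t := mul_le_of_le_one_left hts.le hτk.2
        linarith
    -- combine the two estimates
    have hcomb : D (k' + 1) ≤ (1 - τ) * D k' + (A * u + E1 * q ^ (k' + 1)) := by
      rw [hrec]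
      have h1 : (1 - τs (k' + 1)) * D k' ≤ (1 - τ) * D k' :=
        mul_le_mul_of_nonneg_right (by linarith [hτk.1]) (hD0 k')
      linarith [hkey]
    have h2 : D (k' + 1 + k1) ≤ D (k' + 1) := hDanti _ _ (by omega)
    have h3 : D k' ≤ D (k' - k1) := hDanti _ _ (by omega)
    have h4 : (1 + A) * D (k' + 1 + k1) ≤
        (1 + A - τ) * D (k' - k1) + E1 * q ^ (k' + 1) := by
      have h5 : (1 - τ) * D k' ≤ (1 - τ) * D (k' - k1) :=
        mul_le_mul_of_nonneg_left h3 (by linarith)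
      rw [hudef] at hcomb
      linarith [hcomb, h2, h5]
    have h6 : D (k' + 1 + k1) ≤
        ((1 + A - τ) * D (k' - k1) + E1 * q ^ (k' + 1)) / (1 + A) := by
      rw [le_div_iff₀ h1A]
      have hcm2 : D (k' + 1 + k1) * (1 + A) = (1 + A) * D (k' + 1 + k1) := mul_comm _ _
      rw [hcm2]; linarith [h4]
    calc D (k' + 1 + k1) ≤ _ := h6
      _ ≤ ρZ * D (k' - k1) + E1 * q ^ (k' + 1) := by
        have heq2 : ((1 + A - τ) * D (k' - k1) + E1 * q ^ (k' + 1)) / (1 + A)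
            = ρZ * D (k' - k1) + E1 * q ^ (k' + 1) / (1 + A) := by
          rw [hρZdef]; field_simp
        rw [heq2]
        have h7 := div_le_self hqp (by linarith : (1:ℝ) ≤ 1 + A)
        linarith
  -- ## choice of the base index N
  have h1s : (0:ℝ) < 1 - s := by linarith only [hs1]
  set K1 := (k1 : ℝ) / W + (1 / s ^ (k1 + m)) * (1 - s)⁻¹ / W with hK1def
  clear_value K1
  set K2 := Real.sqrt G1 * (1 - s)⁻¹ / W with hK2def
  clear_value K2
  have hDshift : Tendsto (fun n : ℕ => D (n - (k1 + 1))) atTop (nhds 0) :=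
    hDlim.comp (tendsto_sub_atTop_nat (k1 + 1))
  have hsqrtD : Tendsto (fun n : ℕ => Real.sqrt (D (n - (k1 + 1)))) atTop (nhds 0) := by
    have hcont : Tendsto Real.sqrt (nhds 0) (nhds 0) := by
      have := Real.continuous_sqrt.tendsto 0
      simpa using this
    exact hcont.comp hDshift
  have hsN : Tendsto (fun n : ℕ => K2 * s ^ n) atTop (nhds 0) := by
    have := (tendsto_pow_atTop_nhds_zero_of_lt_one hs0.le hs1).const_mul K2
    simpa using this
  have hRlim : Tendsto (fun n : ℕ => Real.sqrt (D (n - (k1 + 1))) * K1 + K2 * s ^ n)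
      atTop (nhds 0) := by
    have := (hsqrtD.mul_const K1).add hsN
    simpa using this
  have hevN : ∀ᶠ n in atTop, N0 ≤ n ∧
      Real.sqrt (D (n - (k1 + 1))) * K1 + K2 * s ^ n ≤ δ / 2 :=
    (eventually_ge_atTop N0).and (hRlim.eventually_le_const (by linarith only [hδ]))
  have hballj : ∀ᶠ j in atTop, ‖x (ks j) - xbar‖ ≤ δ / 2 := by
    have h1 : Metric.closedBall xbar (δ / 2) ∈ nhds xbar :=
      Metric.closedBall_mem_nhds xbar (by linarith only [hδ])
    filter_upwards [hxconv.eventually h1] with j hj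
    rw [← dist_eq_norm]
    exact hj
  obtain ⟨j0, hj0⟩ := ((hks.tendsto_atTop.eventually hevN).and hballj).exists
  obtain ⟨⟨hNN0, hNsmall⟩, hNball⟩ := hj0
  set N := ks j0 with hNdef
  clear_value N
  have hNk1 : k1 + 1 ≤ N := le_trans (le_max_right _ _) (hN0 N hNN0).2
  -- ## the geometric envelope
  set V := D (N - (k1 + 1)) with hVdef
  clear_value V
  have hV0 : 0 ≤ V := by rw [hVdef]; exact hD0 _
  set G := max G1 (V / σ ^ (N + k1 + m)) with hGdef
  clear_value G
  have hGG1 : G1 ≤ G := by rw [hGdef]; exact le_max_left _ _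
  have hG0 : 0 < G := lt_of_lt_of_le hG1 hGG1
  have hGV : V ≤ G * σ ^ (N + k1 + m) := by
    have hp : (0:ℝ) < σ ^ (N + k1 + m) := pow_pos hσ0 _
    have h1 : V / σ ^ (N + k1 + m) ≤ G := by rw [hGdef]; exact le_max_right _ _
    calc V = V / σ ^ (N + k1 + m) * σ ^ (N + k1 + m) := by field_simp
      _ ≤ G * σ ^ (N + k1 + m) := mul_le_mul_of_nonneg_right h1 hp.le
  have hsqrtG : Real.sqrt G ≤ Real.sqrt G1 + Real.sqrt V / s ^ (N + k1 + m) := by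
    have hv : Real.sqrt (V / σ ^ (N + k1 + m)) = Real.sqrt V / s ^ (N + k1 + m) := by
      rw [Real.sqrt_div hV0, hsσ]
    have hnn1 : 0 ≤ Real.sqrt V / s ^ (N + k1 + m) :=
      div_nonneg (Real.sqrt_nonneg _) (pow_nonneg hs0.le _)
    have hnn2 : 0 ≤ Real.sqrt G1 := Real.sqrt_nonneg _
    rw [hGdef]
    rcases max_cases G1 (V / σ ^ (N + k1 + m)) with ⟨hmax, _⟩ | ⟨hmax, _⟩ <;> rw [hmax]
    · linarith
    · rw [hv]; linarith
  -- base case of the envelope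
  have hbase : ∀ j, N + k1 ≤ j → j < N + k1 + m → D j ≤ G * σ ^ j := by
    intro j hj1 hj2
    have h3 : D j ≤ V := by rw [hVdef]; exact hDanti _ _ (by omega)
    calc D j ≤ V := h3
      _ ≤ G * σ ^ (N + k1 + m) := hGV
      _ ≤ G * σ ^ j := mul_le_mul_of_nonneg_left
          (pow_le_pow_of_le_one hσ0.le hσ1.le (by omega)) hG0.le
  -- inductive case of the envelope
  have hindD : ∀ j, N + k1 + m ≤ j → ‖x (j - k1) - xbar‖ ≤ δ →
      D (j - m) ≤ G * σ ^ (j - m) → D j ≤ G * σ ^ j := by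
    intro j hj hball hIH
    have hk : N0 ≤ j - k1 := by omega
    have hstep' := hstep (j - k1) hk hball
    have hje : j - k1 + k1 = j := by omega
    have hje2 : j - k1 - (k1 + 1) = j - m := by omega
    have hje3 : j - m + m = j := by omega
    rw [hje, hje2] at hstep'
    have hq2 : E1 * q ^ (j - k1) ≤ E2 * σ ^ j := by
      have e2 : j - k1 + k1 = j := by omega
      have e3 : E1 = E2 * q ^ k1 := by
        rw [hE2def]; field_simp
      have e4 : E2 * q ^ k1 * q ^ (j - k1) = E2 * q ^ j := by
        rw [mul_assoc, mul_comm (q ^ k1), ← pow_add, e2]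
      rw [e3, e4]
      exact mul_le_mul_of_nonneg_left (pow_le_pow_left₀ hq0.le hqσ j) hE2.le
    have hρG : ρZ * D (j - m) ≤ ρZ * (G * σ ^ (j - m)) := mul_le_mul_of_nonneg_left hIH hρZ0
    have hσeq : σ ^ (j - m) * ρh = σ ^ j := by rw [← hσm, ← pow_add, hje3]
    have hfin : ρZ * (G * σ ^ (j - m)) + E2 * σ ^ j ≤ G * σ ^ j := by
      have hσjm : (0:ℝ) < σ ^ (j - m) := pow_pos hσ0 _
      have hkey : ρZ * G + E2 * ρh ≤ G * ρh := by
        have h2 : (0:ℝ) < ρh - ρZ := by linarith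
        have h1 : E2 * ρh ≤ G * (ρh - ρZ) := by
          rw [hG1def] at hGG1
          rw [div_le_iff₀ h2] at hGG1
          linarith only [hGG1]
        linarith only [h1]
      calc ρZ * (G * σ ^ (j - m)) + E2 * σ ^ j
          = (ρZ * G + E2 * ρh) * σ ^ (j - m) := by rw [← hσeq]; ring
        _ ≤ (G * ρh) * σ ^ (j - m) := mul_le_mul_of_nonneg_right hkey hσjm.le
        _ = G * σ ^ j := by rw [← hσeq]; ring
    linarith only [hstep', hρG, hq2, hfin]
  -- ball step
  have hballstep : ∀ n, N ≤ n →
      (∀ j, N + k1 ≤ j → j ≤ n + k1 → D j ≤ G * σ ^ j) → ‖x (n + 1) - xbar‖ ≤ δ := by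
    intro n hn hD2
    obtain ⟨p, hp1⟩ : ∃ p, N + p = n + 1 := ⟨n + 1 - N, by omega⟩
    have htri : ‖x (n + 1) - xbar‖ ≤ ‖x N - xbar‖
        + ∑ i ∈ Finset.range p, ‖x (N + i + 1) - x (N + i)‖ := by
      have h1 := telescopeAux x N p
      have h2 : ‖x (N + p) - xbar‖ ≤ ‖x (N + p) - x N‖ + ‖x N - xbar‖ := by
        have := dist_triangle (x (N + p)) (x N) xbar
        simpa [dist_eq_norm] using this
      rw [hp1] at h1 h2
      linarith only [h1, h2]
    have hterm : ∀ i ∈ Finset.range p,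
        ‖x (N + i + 1) - x (N + i)‖ ≤ (if i < k1 then Real.sqrt V / W else 0)
          + Real.sqrt G * s ^ (N + i) / W := by
      intro i hi
      rw [Finset.mem_range] at hi
      have h1 : ‖x (N + i + 1) - x (N + i)‖ ≤ Real.sqrt (D (N + i)) / W :=
        hdisp' (N + i)
      have h4 : 0 ≤ Real.sqrt G * s ^ (N + i) / W :=
        div_nonneg (mul_nonneg (Real.sqrt_nonneg _) (pow_nonneg hs0.le _)) hW0.le
      by_cases hik : i < k1
      · have h2 : D (N + i) ≤ V := by rw [hVdef]; exact hDanti _ _ (by omega)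
        have h3 : Real.sqrt (D (N + i)) ≤ Real.sqrt V := Real.sqrt_le_sqrt h2
        have h5 : Real.sqrt (D (N + i)) / W ≤ Real.sqrt V / W := by gcongr
        rw [if_pos hik]
        linarith only [h1, h4, h5]
      · rw [if_neg hik]
        have h2 : D (N + i) ≤ G * σ ^ (N + i) := hD2 (N + i) (by omega) (by omega)
        have h3 : Real.sqrt (D (N + i)) ≤ Real.sqrt G * s ^ (N + i) := by
          calc Real.sqrt (D (N + i)) ≤ Real.sqrt (G * σ ^ (N + i)) := Real.sqrt_le_sqrt h2
            _ = Real.sqrt G * s ^ (N + i) := by rw [Real.sqrt_mul hG0.le, hsσ]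
        have h5 : Real.sqrt (D (N + i)) / W ≤ Real.sqrt G * s ^ (N + i) / W := by gcongr
        linarith only [h1, h5]
    have hsum1 : ∑ i ∈ Finset.range p, ‖x (N + i + 1) - x (N + i)‖ ≤
        (k1 : ℝ) * (Real.sqrt V / W) + Real.sqrt G / W * (s ^ N * (1 - s)⁻¹) := by
      calc ∑ i ∈ Finset.range p, ‖x (N + i + 1) - x (N + i)‖
          ≤ ∑ i ∈ Finset.range p, ((if i < k1 then Real.sqrt V / W else 0)
            + Real.sqrt G * s ^ (N + i) / W) := Finset.sum_le_sum hterm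
        _ = (∑ i ∈ Finset.range p, (if i < k1 then Real.sqrt V / W else 0))
            + ∑ i ∈ Finset.range p, Real.sqrt G * s ^ (N + i) / W := Finset.sum_add_distrib
        _ ≤ (k1 : ℝ) * (Real.sqrt V / W) + Real.sqrt G / W * (s ^ N * (1 - s)⁻¹) := by
          apply add_le_add
          · have h1 : (∑ i ∈ Finset.range p, (if i < k1 then Real.sqrt V / W else 0))
                = ∑ i ∈ (Finset.range p).filter (· < k1), (Real.sqrt V / W) :=
              (Finset.sum_filter _ _).symm
            rw [h1, Finset.sum_const]
            have h2 : ((Finset.range p).filter (· < k1)).card ≤ k1 := by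
              have hsub : (Finset.range p).filter (· < k1) ⊆ Finset.range k1 := by
                intro i hi2
                simp only [Finset.mem_filter, Finset.mem_range] at hi2 ⊢
                exact hi2.2
              simpa using Finset.card_le_card hsub
            have h3 : 0 ≤ Real.sqrt V / W := div_nonneg (Real.sqrt_nonneg _) hW0.le
            rw [nsmul_eq_mul]
            exact mul_le_mul_of_nonneg_right (by exact_mod_cast h2) h3
          · have h1 : ∀ i : ℕ, Real.sqrt G * s ^ (N + i) / W
                = Real.sqrt G / W * s ^ N * s ^ i := by
              intro i; rw [pow_add]; ring
            rw [Finset.sum_congr rfl fun i _ => h1 i, ← Finset.mul_sum]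
            have h2 : ∑ i ∈ Finset.range p, s ^ i ≤ (1 - s)⁻¹ := by
              have h3 := Summable.sum_le_tsum (Finset.range p)
                (fun i _ => pow_nonneg hs0.le i) (summable_geometric_of_lt_one hs0.le hs1)
              rwa [tsum_geometric_of_lt_one hs0.le hs1] at h3
            have h4 : (0:ℝ) ≤ Real.sqrt G / W * s ^ N :=
              mul_nonneg (div_nonneg (Real.sqrt_nonneg _) hW0.le) (pow_nonneg hs0.le _)
            calc Real.sqrt G / W * s ^ N * ∑ i ∈ Finset.range p, s ^ i
                ≤ Real.sqrt G / W * s ^ N * (1 - s)⁻¹ := mul_le_mul_of_nonneg_left h2 h4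
              _ = Real.sqrt G / W * (s ^ N * (1 - s)⁻¹) := by ring
    -- assemble
    have hWne : W ≠ 0 := hW0.ne'
    have hsne : s ≠ 0 := hs0.ne'
    have h1sne : (1 : ℝ) - s ≠ 0 := h1s.ne'
    have hspne : s ^ (k1 + m) ≠ 0 := pow_ne_zero _ hsne
    have hfinal : (k1 : ℝ) * (Real.sqrt V / W) + Real.sqrt G / W * (s ^ N * (1 - s)⁻¹)
        ≤ Real.sqrt V * K1 + K2 * s ^ N := by
      have hnn : (0:ℝ) ≤ s ^ N * (1 - s)⁻¹ :=
        mul_nonneg (pow_nonneg hs0.le _) (inv_nonneg.2 h1s.le)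
      have h2 : Real.sqrt G / W * (s ^ N * (1 - s)⁻¹)
          ≤ (Real.sqrt G1 + Real.sqrt V / s ^ (N + k1 + m)) / W * (s ^ N * (1 - s)⁻¹) := by
        apply mul_le_mul_of_nonneg_right _ hnn
        gcongr
      have h3 : (Real.sqrt G1 + Real.sqrt V / s ^ (N + k1 + m)) / W * (s ^ N * (1 - s)⁻¹)
          = K2 * s ^ N + Real.sqrt V * ((1 / s ^ (k1 + m)) * (1 - s)⁻¹ / W) := by
        have hsp : s ^ (N + k1 + m) = s ^ N * s ^ (k1 + m) := by
          rw [show N + k1 + m = N + (k1 + m) by omega, pow_add]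
        rw [hK2def, hsp]
        field_simp
      have h4 : Real.sqrt V * K1 = (k1 : ℝ) * (Real.sqrt V / W)
          + Real.sqrt V * ((1 / s ^ (k1 + m)) * (1 - s)⁻¹ / W) := by
        rw [hK1def]; ring
      rw [h4]
      linarith only [h2, h3.le, h3.ge]
    have hVsmall : Real.sqrt V * K1 + K2 * s ^ N ≤ δ / 2 := hNsmall
    calc ‖x (n + 1) - xbar‖ ≤ ‖x N - xbar‖
        + ∑ i ∈ Finset.range p, ‖x (N + i + 1) - x (N + i)‖ := htri
      _ ≤ δ / 2 + (Real.sqrt V * K1 + K2 * s ^ N) := by linarith only [hsum1, hfinal, hNball]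
      _ ≤ δ / 2 + δ / 2 := by linarith only [hVsmall]
      _ = δ := by ring
  -- ## the main induction
  have main : ∀ n, N ≤ n → ((∀ j, N ≤ j → j ≤ n → ‖x j - xbar‖ ≤ δ) ∧
      (∀ j, N + k1 ≤ j → j ≤ n + k1 → D j ≤ G * σ ^ j)) := by
    intro n hn
    induction n, hn using Nat.le_induction with
    | base =>
      constructor
      · intro j h1 h2
        have hje : j = N := by omega
        subst hje
        linarith only [hNball, hδ]
      · intro j h1 h2
        exact hbase j h1 (by omega)
    | succ n hn IH =>
      obtain ⟨IH1, IH2⟩ := IH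
      have H1 : ∀ j, N ≤ j → j ≤ n + 1 → ‖x j - xbar‖ ≤ δ := by
        intro j h1 h2
        rcases Nat.lt_or_ge j (n + 1) with h3 | h3
        · exact IH1 j h1 (by omega)
        · have hje : j = n + 1 := by omega
          subst hje
          exact hballstep n hn IH2
      have H2 : ∀ j, N + k1 ≤ j → j ≤ n + 1 + k1 → D j ≤ G * σ ^ j := by
        intro j h1 h2
        rcases Nat.lt_or_ge j (n + 1 + k1) with h3 | h3
        · exact IH2 j h1 (by omega)
        · rcases Nat.lt_or_ge j (N + k1 + m) with h4 | h4
          · exact hbase j h1 h4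
          · apply hindD j h4
            · have hje : j - k1 = n + 1 := by omega
              rw [hje]
              exact H1 (n + 1) (by omega) le_rfl
            · exact IH2 (j - m) (by omega) (by omega)
      exact ⟨H1, H2⟩
  -- ## conclusions
  have hDgeom : ∀ j, N + k1 ≤ j → D j ≤ G * σ ^ j := fun j hj =>
    (main j (by omega)).2 j hj (by omega)
  set DD := Real.sqrt G / W with hDDdef
  clear_value DD
  have hDD0 : 0 < DD := by rw [hDDdef]; exact div_pos (Real.sqrt_pos.2 hG0) hW0
  have hdgeom : ∀ k, N + k1 ≤ k → ‖x (k + 1) - x k‖ ≤ DD * s ^ k := by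
    intro k hk
    have h1 : ‖x (k + 1) - x k‖ ≤ Real.sqrt (D k) / W := hdisp' k
    have h2 : Real.sqrt (D k) ≤ Real.sqrt G * s ^ k := by
      calc Real.sqrt (D k) ≤ Real.sqrt (G * σ ^ k) := Real.sqrt_le_sqrt (hDgeom k hk)
        _ = Real.sqrt G * s ^ k := by rw [Real.sqrt_mul hG0.le, hsσ]
    calc ‖x (k + 1) - x k‖ ≤ Real.sqrt (D k) / W := h1
      _ ≤ Real.sqrt G * s ^ k / W := by gcongr
      _ = DD * s ^ k := by rw [hDDdef]; ring
  have hsum : Summable (fun k => ‖x (k + 1) - x k‖) := by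
    apply (summable_nat_add_iff (N + k1)).1
    apply Summable.of_nonneg_of_le (fun n => norm_nonneg _)
      (f := fun n : ℕ => DD * s ^ (N + k1) * s ^ n)
    · intro n
      have h1 := hdgeom (n + (N + k1)) (by omega)
      calc ‖x (n + (N + k1) + 1) - x (n + (N + k1))‖ ≤ DD * s ^ (n + (N + k1)) := h1
        _ = DD * s ^ (N + k1) * s ^ n := by rw [pow_add]; ring
    · exact (summable_geometric_of_lt_one hs0.le hs1).mul_left _
  have hcauchy : CauchySeq x := by
    apply cauchySeq_of_summable_dist
    have he : (fun n => dist (x n) (x n.succ)) = fun n => ‖x (n + 1) - x n‖ := by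
      funext n; rw [dist_eq_norm, norm_sub_rev]
    rw [he]
    exact hsum
  have htend : Tendsto x atTop (nhds xbar) :=
    tendsto_nhds_of_cauchySeq_of_subseq hcauchy hks.tendsto_atTop hxconv
  refine ⟨htend, hsum, DD * (1 - s)⁻¹, mul_pos hDD0 (inv_pos.2 h1s), s, ⟨hs0, hs1⟩, ?_⟩
  rw [eventually_atTop]
  refine ⟨N + k1, fun k hk => ?_⟩
  have hsummk : Summable (fun j : ℕ => ‖x (k + j + 1) - x (k + j)‖) := by
    have h1 := (summable_nat_add_iff k).2 hsum
    refine h1.congr fun j => ?_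
    have hje : j + k = k + j := Nat.add_comm j k
    simp only [hje]
  constructor
  · have hpart : ∀ n : ℕ, ‖x k - x (k + n)‖ ≤ ∑' j : ℕ, ‖x (k + j + 1) - x (k + j)‖ := by
      intro n
      have h1 := telescopeAux x k n
      have h2 : ∑ i ∈ Finset.range n, ‖x (k + i + 1) - x (k + i)‖
          ≤ ∑' j : ℕ, ‖x (k + j + 1) - x (k + j)‖ :=
        Summable.sum_le_tsum _ (fun i _ => norm_nonneg _) hsummk
      have h3 : ‖x k - x (k + n)‖ = ‖x (k + n) - x k‖ := norm_sub_rev _ _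
      rw [h3]
      linarith only [h1, h2]
    have hlim2 : Tendsto (fun n => ‖x k - x (k + n)‖) atTop (nhds ‖x k - xbar‖) := by
      have h1 : Tendsto (fun n : ℕ => k + n) atTop atTop :=
        tendsto_atTop_mono (fun n => Nat.le_add_left n k) tendsto_id
      have h2 : Tendsto (fun n : ℕ => x (k + n)) atTop (nhds xbar) := htend.comp h1
      have h3 : Tendsto (fun n : ℕ => x k - x (k + n)) atTop (nhds (x k - xbar)) :=
        tendsto_const_nhds.sub h2
      exact h3.norm
    exact le_of_tendsto hlim2 (Eventually.of_forall hpart)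
  · have h1 : ∀ j : ℕ, ‖x (k + j + 1) - x (k + j)‖ ≤ DD * s ^ (k + j) := fun j =>
      hdgeom (k + j) (by omega)
    have he : (fun j : ℕ => DD * s ^ (k + j)) = fun j => DD * s ^ k * s ^ j := by
      funext j; rw [pow_add]; ring
    have h2 : Summable (fun j : ℕ => DD * s ^ (k + j)) := by
      rw [he]
      exact (summable_geometric_of_lt_one hs0.le hs1).mul_left _
    calc (∑' j : ℕ, ‖x (k + j + 1) - x (k + j)‖) ≤ ∑' j : ℕ, DD * s ^ (k + j) :=
        Summable.tsum_le_tsum h1 hsummk h2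
      _ = DD * s ^ k * (1 - s)⁻¹ := by
        rw [he, tsum_mul_left, tsum_geometric_of_lt_one hs0.le hs1]
      _ = DD * (1 - s)⁻¹ * s ^ k := by ring
end

section
/- Let X and Y be finite-dimensional real normed vector spaces, let O ⊆ X be open, and let G : O → Y be locally Lipschitz continuous on O. Let {x^k}_{k≥0} ⊆ O be a bounded sequence with x^{k+1} − x^k → 0 and such that every cluster point of {x^k} belongs to O. Then there exist L̄ > 0 and K ∈ ℕ such that ‖G(x^{k+1}) − G(x^k)‖ ≤ L̄·‖x^{k+1} − x^k‖ for all k ≥ K. -/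
open Filter Metric

/-- The claim (4.5) from the proof of Theorem 4.1: if `G` is locally Lipschitz on an
open set `O` of a finite-dimensional space, and `{x^k} ⊆ O` is bounded with
`x^{k+1} − x^k → 0` and all its cluster points in `O`, then eventually
`‖G(x^{k+1}) − G(x^k)‖ ≤ L̄·‖x^{k+1} − x^k‖` for some `L̄ > 0`. -/
theorem stmt_15 {X Y : Type*} [NormedAddCommGroup X] [NormedSpace ℝ X]
    [FiniteDimensional ℝ X] [NormedAddCommGroup Y] [NormedSpace ℝ Y]
    [FiniteDimensional ℝ Y]
    (O : Set X) (hO : IsOpen O) (G : X → Y)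
    (hG : ∀ z ∈ O, ∃ K : NNReal, ∃ t ∈ nhdsWithin z O, LipschitzOnWith K G t)
    (x : ℕ → X) (hxO : ∀ k, x k ∈ O)
    (hbdd : Bornology.IsBounded (Set.range x))
    (hdiff : Filter.Tendsto (fun k => x (k + 1) - x k) Filter.atTop (nhds 0))
    (hcluster : ∀ z : X, MapClusterPt z Filter.atTop x → z ∈ O) :
    ∃ L : ℝ, 0 < L ∧ ∃ K : ℕ, ∀ k : ℕ, K ≤ k →
      ‖G (x (k + 1)) - G (x k)‖ ≤ L * ‖x (k + 1) - x k‖ := by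
  by_contra h
  push_neg at h
  -- extract a subsequence violating the Lipschitz bound with constant n+1
  have hfreq : ∀ n : ℕ, ∃ᶠ k in atTop, (↑n + 1 : ℝ) * ‖x (k + 1) - x k‖ <
      ‖G (x (k + 1)) - G (x k)‖ := by
    intro n
    rw [frequently_atTop]
    intro K
    obtain ⟨k, hk, hlt⟩ := h (n + 1) (by positivity) K
    exact ⟨k, hk, by push_cast; linarith⟩
  obtain ⟨φ, hφmono, hφ⟩ := Filter.extraction_forall_of_frequently hfreq
  -- the subsequence x ∘ φ lies in a compact set
  obtain ⟨R, hR⟩ := hbdd.subset_closedBall (0 : X)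
  have hmem : ∀ n, x (φ n) ∈ closedBall (0 : X) R := fun n => hR ⟨φ n, rfl⟩
  obtain ⟨z, -, ψ, hψmono, hψlim⟩ :=
    (isCompact_closedBall (0 : X) R).tendsto_subseq hmem
  have hzO : z ∈ O := by
    refine hcluster z (MapClusterPt.of_comp (φ := φ ∘ ψ)
      ((hφmono.comp hψmono).tendsto_atTop) ?_)
    exact hψlim.mapClusterPt
  obtain ⟨K, t, htmem, hlip⟩ := hG z hzO
  have htnhds : t ∈ nhds z := by
    rwa [nhdsWithin_eq_nhds.2 (hO.mem_nhds hzO)] at htmem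
  obtain ⟨r, hr, hball⟩ := Metric.mem_nhds_iff.mp htnhds
  -- eventually both points of the subsequence are in the ball, and index large
  have h1 : ∀ᶠ n in atTop, dist (x (φ (ψ n))) z < r / 2 :=
    (Metric.tendsto_nhds.mp hψlim) (r / 2) (by positivity)
  have h2 : ∀ᶠ n in atTop, ‖x (φ (ψ n) + 1) - x (φ (ψ n))‖ < r / 2 := by
    have := hdiff.comp ((hφmono.comp hψmono).tendsto_atTop)
    have := (tendsto_iff_norm_sub_tendsto_zero.mp this)
    simp only [sub_zero] at this
    exact (this.eventually (eventually_lt_nhds (by positivity : (0:ℝ) < r/2)))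
  have h3 : ∀ᶠ n : ℕ in atTop, (K : ℝ) ≤ (n : ℝ) := by
    filter_upwards [eventually_ge_atTop ⌈(K : ℝ)⌉₊] with n hn
    exact le_trans (Nat.le_ceil _) (by exact_mod_cast hn)
  obtain ⟨n, hn1, hn2, hn3⟩ := (h1.and (h2.and h3)).exists
  set k := φ (ψ n) with hk
  have hxk : x k ∈ ball z r := by
    rw [mem_ball]
    linarith [dist_nonneg (x := x k) (y := z)]
  have hxk1 : x (k + 1) ∈ ball z r := by
    rw [mem_ball, dist_eq_norm]
    calc ‖x (k + 1) - z‖ ≤ ‖x (k + 1) - x k‖ + ‖x k - z‖ := norm_sub_le_norm_sub_add_norm_sub _ _ _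
    _ < r / 2 + r / 2 := by
        have := hn1; rw [dist_eq_norm] at this; exact add_lt_add hn2 this
    _ = r := by ring
  have hle : ‖G (x (k + 1)) - G (x k)‖ ≤ (K : ℝ) * ‖x (k + 1) - x k‖ := by
    have := hlip.norm_sub_le (hball hxk1) (hball hxk)
    simpa using this
  have hviol := hφ (ψ n)
  have hψn : (n : ℝ) ≤ (ψ n : ℝ) := by exact_mod_cast hψmono.le_apply
  have hd : (0 : ℝ) ≤ ‖x (k + 1) - x k‖ := norm_nonneg _
  nlinarith [hviol, hle]
end

section
/- Let E be a finite-dimensional real inner product space, f : E → ℝ continuously differentiable, and g : E → ℝ ∪ {+∞}. Let {x^k}_{k≥0} ⊆ E and reals γ_k with 0 < γ̲ ≤ γ_k for all k, and suppose that for every k the point x^{k+1} is a global minimizer over E of the function u ↦ ⟨∇f(x^k), u − x^k⟩ + (1/(2γ_k))·‖u − x^k‖² + g(u) (i.e., x^{k+1} ∈ Prox_{γ_k g}(x^k − γ_k ∇f(x^k))). If a subsequence {x^{k_j}} satisfies x^{k_j} → x̄ and x^{k_j} − x^{k_j−1} → 0, then limsup_{j→∞} Θ(x^{k_j}) ≤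 Θ(x̄), where Θ := f + g. -/
/-!
Test the proximal inequality at the step `x^{k_j - 1} ↦ x^{k_j}` against `u = x̄`. Since the step
coefficients `1/(2γ_k)` lie in `[0, 1/(2γ̲)]`, this gives
`Θ(x^{k_j}) ≤ f(x^{k_j}) + ⟨∇f(x^{k_j-1}), x̄ - x^{k_j}⟩ + ‖x̄ - x^{k_j-1}‖²/(2γ̲) + g(x̄)`.
Both `x^{k_j}` and `x^{k_j - 1}` tend to `x̄` and `∇f` is continuous, so the real part of the
right-hand side tends to `f(x̄)`, while `g(x̄)` is a fixed extended real.
-/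

open Filter Topology
open scoped RealInnerProductSpace

namespace EReal

lemma tendsto_coe_add_const {α : Type*} {l : Filter α} {a : α → ℝ} {a₀ : ℝ}
    (ha : Tendsto a l (𝓝 a₀)) (K : EReal) :
    Tendsto (fun i => (a i : EReal) + K) l (𝓝 ((a₀ : EReal) + K)) :=
  (continuousAt_add (p := ((a₀ : EReal), K)) (Or.inl (coe_ne_top a₀))
    (Or.inl (coe_ne_bot a₀))).tendsto.comp ((tendsto_coe.2 ha).prodMk_nhds tendsto_const_nhds)

lemma limsup_le_coe_add_of_eventually_le {α : Type*} {l : Filter α} [l.NeBot] {u : α → EReal}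
    {a : α → ℝ} {a₀ : ℝ} {K : EReal} (hu : ∀ᶠ i in l, u i ≤ (a i : EReal) + K)
    (ha : Tendsto a l (𝓝 a₀)) :
    limsup u l ≤ (a₀ : EReal) + K :=
  (limsup_le_limsup hu).trans (tendsto_coe_add_const ha K).limsup_eq.le

lemma coe_add_le_coe_add_of_le {A B D : ℝ} {p q : EReal}
    (h : (A : EReal) + p ≤ (B : EReal) + q) (hD : B - A ≤ D) (r : ℝ) :
    (r : EReal) + p ≤ ((r + D : ℝ) : EReal) + q :=
  calc (r : EReal) + p = ((r - A : ℝ) : EReal) + ((A : EReal) + p) := by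
        rw [← add_assoc, ← coe_add, _root_.sub_add_cancel]
    _ ≤ ((r - A : ℝ) : EReal) + ((B : EReal) + q) := add_le_add_right h _
    _ = ((r - A + B : ℝ) : EReal) + q := by rw [← add_assoc, ← coe_add]
    _ ≤ ((r + D : ℝ) : EReal) + q := add_le_add_left (EReal.coe_le_coe_iff.2 (by linarith)) _

end EReal

section ProximalGradient

variable {E : Type*} [NormedAddCommGroup E] [InnerProductSpace ℝ E]

lemma inner_add_sq_norm_sub_le {v x y u : E} {c C : ℝ} (hc : 0 ≤ c) (hcC : c ≤ C) :
    (⟪v, u - x⟫ + c * ‖u - x‖ ^ 2) - (⟪v, y - x⟫ + c * ‖y - x‖ ^ 2) ≤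
      ⟪v, u - y⟫ + C * ‖u - x‖ ^ 2 := by
  have hinner : ⟪v, u - x⟫ - ⟪v, y - x⟫ = ⟪v, u - y⟫ := by
    rw [← inner_sub_right, sub_sub_sub_cancel_right]
  have hquad : c * ‖u - x‖ ^ 2 ≤ C * ‖u - x‖ ^ 2 := by gcongr
  linarith [mul_nonneg hc (sq_nonneg ‖y - x‖)]

lemma tendsto_inner_add_sq_norm_sub_nhds_zero {α : Type*} {l : Filter α} {G : E → E}
    (hG : Continuous G) {y z : α → E} {x₀ : E} (hy : Tendsto y l (𝓝 x₀)) (hz : Tendsto z l (𝓝 x₀))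
    (C : ℝ) : Tendsto (fun i => ⟪G (z i), x₀ - y i⟫ + C * ‖x₀ - z i‖ ^ 2) l (𝓝 0) := by
  have hinner := ((hG.tendsto x₀).comp hz).inner (𝕜 := ℝ) ((tendsto_const_nhds (x := x₀)).sub hy)
  have hsq := ((tendsto_const_nhds (x := x₀)).sub hz).norm.pow 2
  simpa using hinner.add (hsq.const_mul C)

end ProximalGradient

/-- The verification of condition H3 in the proof of Theorem 4.1: along a proximal
gradient sequence (with step sizes bounded below), if a subsequence converges to `x̄`
together with vanishing consecutive differences, then
`limsup_j Θ(x^{k_j}) ≤ Θ(x̄)` where `Θ = f + g`. -/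
theorem stmt_16 {E : Type*} [NormedAddCommGroup E] [InnerProductSpace ℝ E]
    [FiniteDimensional ℝ E]
    (f : E → ℝ) (f' : E → E) (hf : ∀ z : E, HasGradientAt f (f' z) z)
    (hf'cont : Continuous f')
    (g : E → EReal)
    (x : ℕ → E) (γ : ℕ → ℝ) (γlow : ℝ) (hγlow : 0 < γlow) (hγ : ∀ k, γlow ≤ γ k)
    (hprox : ∀ k : ℕ, ∀ u : E,
      ((⟪f' (x k), x (k + 1) - x k⟫ + (1 / (2 * γ k)) * ‖x (k + 1) - x k‖ ^ 2 : ℝ) : EReal)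
          + g (x (k + 1)) ≤
        ((⟪f' (x k), u - x k⟫ + (1 / (2 * γ k)) * ‖u - x k‖ ^ 2 : ℝ) : EReal) + g u)
    (xbar : E) (ks : ℕ → ℕ) (hks : StrictMono ks)
    (hxconv : Filter.Tendsto (fun j => x (ks j)) Filter.atTop (nhds xbar))
    (hdiff : Filter.Tendsto (fun j => x (ks j) - x (ks j - 1)) Filter.atTop (nhds 0)) :
    Filter.limsup (fun j => ((f (x (ks j)) : EReal) + g (x (ks j)))) Filter.atTop ≤
      (f xbar : EReal) + g xbar := by
  have hprev : Tendsto (fun j => x (ks j - 1)) atTop (𝓝 xbar) := by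
    simpa using hxconv.sub hdiff
  have hfcont : Continuous f :=
    continuous_iff_continuousAt.2 fun z => (hf z).continuousAt
  set err : ℕ → ℝ := fun j =>
    ⟪f' (x (ks j - 1)), xbar - x (ks j)⟫ + 1 / (2 * γlow) * ‖xbar - x (ks j - 1)‖ ^ 2
  have herr : Tendsto err atTop (𝓝 0) :=
    tendsto_inner_add_sq_norm_sub_nhds_zero hf'cont hxconv hprev _
  refine EReal.limsup_le_coe_add_of_eventually_le ?_
    (by simpa using ((hfcont.tendsto xbar).comp hxconv).add herr)
  filter_upwards [eventually_ge_atTop 1] with j hj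
  obtain ⟨k, hk⟩ : ∃ k, ks j = k + 1 := Nat.exists_eq_add_one.2 (hj.trans hks.le_apply)
  have hγk : 0 < γ k := hγlow.trans_le (hγ k)
  simp only [err, hk, Nat.add_sub_cancel]
  have hcoef : 1 / (2 * γ k) ≤ 1 / (2 * γlow) :=
    one_div_le_one_div_of_le (by positivity) (by linarith [hγ k])
  exact EReal.coe_add_le_coe_add_of_le (hprox k xbar)
    (inner_add_sq_norm_sub_le (by positivity) hcoef) _
end

section
/- Let f : ℝⁿ → ℝ be differentiable, and let {x_k}, {d_k} ⊆ ℝⁿ, g_k := ∇f(x_k), and x_{k+1} = x_k + α_k·d_k with steplengths α_k ∈ [α̲, μ] for constants 0 < α̲ ≤ μ. Assume the direction conditions ⟨g_k, d_k⟩ ≤ −c₁·‖g_k‖² and ‖d_k‖ ≤ c₂·‖g_k‖ hold for all k, with constants c₁ > 0 and c₂ > 0, and that there exist β > 0 and reals C_k with f(x_{k+1}) ≤ C_k − β·‖g_k‖² for all k. Then for every k: (a) f(x_{k+1}) ≤ C_k − (β/(μ²·c₂²))·‖x_{k+1} − x_k‖², and (b) ‖g_k‖ ≤ (1/(c₁·α̲))·‖x_{k+1}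 − x_k‖. -/
open scoped RealInnerProductSpace

/-- The Appendix verification that the Zhang–Hager nonmonotone line-search scheme
satisfies conditions H1 and H2: under the direction assumption and the nonmonotone
Armijo decrease `f(x_{k+1}) ≤ C_k − β‖g_k‖²`, one gets the sufficient decrease in
terms of `‖x_{k+1} − x_k‖²` and the relative-error bound on `‖g_k‖`. -/
theorem stmt_18 {n : ℕ} (f : EuclideanSpace ℝ (Fin n) → ℝ)
    (hf : Differentiable ℝ f)
    (x d g : ℕ → EuclideanSpace ℝ (Fin n)) (α : ℕ → ℝ) (C : ℕ → ℝ)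
    (αlow μ c₁ c₂ β : ℝ)
    (hαlow : 0 < αlow) (hαμ : αlow ≤ μ) (hc₁ : 0 < c₁) (hc₂ : 0 < c₂) (hβ : 0 < β)
    (hg : ∀ k : ℕ, HasGradientAt f (g k) (x k))
    (hstep : ∀ k : ℕ, x (k + 1) = x k + α k • d k)
    (hα : ∀ k : ℕ, α k ∈ Set.Icc αlow μ)
    (hdir₁ : ∀ k : ℕ, ⟪g k, d k⟫ ≤ -c₁ * ‖g k‖ ^ 2)
    (hdir₂ : ∀ k : ℕ, ‖d k‖ ≤ c₂ * ‖g k‖)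
    (hdec : ∀ k : ℕ, f (x (k + 1)) ≤ C k - β * ‖g k‖ ^ 2) :
    ∀ k : ℕ,
      f (x (k + 1)) ≤ C k - (β / (μ ^ 2 * c₂ ^ 2)) * ‖x (k + 1) - x k‖ ^ 2 ∧
      ‖g k‖ ≤ (1 / (c₁ * αlow)) * ‖x (k + 1) - x k‖ := by
  intro k
  have hμ : 0 < μ := lt_of_lt_of_le hαlow hαμ
  have hαk := hα k
  have hαk0 : 0 < α k := lt_of_lt_of_le hαlow hαk.1
  have hΔ : x (k + 1) - x k = α k • d k := by rw [hstep k]; abel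
  have hΔn : ‖x (k + 1) - x k‖ = α k * ‖d k‖ := by
    rw [hΔ, norm_smul, Real.norm_eq_abs, abs_of_pos hαk0]
  have hgd : c₁ * ‖g k‖ ≤ ‖d k‖ := by
    rcases eq_or_lt_of_le (norm_nonneg (g k)) with h0 | h0
    · simp [← h0, norm_nonneg]
    · have hcs : -⟪g k, d k⟫ ≤ ‖g k‖ * ‖d k‖ := by
        have := abs_real_inner_le_norm (g k) (d k)
        linarith [neg_abs_le (⟪g k, d k⟫), abs_nonneg (⟪g k, d k⟫)]
      have : c₁ * ‖g k‖ ^ 2 ≤ ‖g k‖ * ‖d k‖ := by nlinarith [hdir₁ k]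
      nlinarith
  constructor
  · have h1 : ‖x (k + 1) - x k‖ ≤ μ * (c₂ * ‖g k‖) := by
      rw [hΔn]
      have := hdir₂ k
      have hdnn : 0 ≤ ‖d k‖ := norm_nonneg _
      nlinarith [hαk.2]
    have h2 : ‖x (k + 1) - x k‖ ^ 2 ≤ μ ^ 2 * c₂ ^ 2 * ‖g k‖ ^ 2 := by
      nlinarith [norm_nonneg (x (k + 1) - x k), norm_nonneg (g k)]
    have h3 : β / (μ ^ 2 * c₂ ^ 2) * ‖x (k + 1) - x k‖ ^ 2 ≤ β * ‖g k‖ ^ 2 := by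
      rw [div_mul_eq_mul_div, div_le_iff₀ (by positivity)]
      nlinarith
    linarith [hdec k]
  · rw [hΔn]
    have h1 : c₁ * αlow * ‖g k‖ ≤ α k * ‖d k‖ := by
      nlinarith [norm_nonneg (g k), norm_nonneg (d k), hαk.1]
    rw [one_div, inv_mul_eq_div, le_div_iff₀ (by positivity)]
    linarith
end
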